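/- arXiv:2403.03404 — 10 statements merged into one kernel-verified Lean document; each statement's English description precedes it below -/
import Mathlib

section
/- Every secure total dominating set of a finite simple graph is a 2-dominating set; consequently γ₂(G) ≤ γ_st(G). -/
open SimpleGraph

variable {V : Type*}

/-- `S` is a total dominating set of `G`: every vertex has a neighbor in `S`. -/
def TotalDom (G : SimpleGraph V) (S : Set V) : Prop :=
  ∀ v : V, ∃ u ∈ S, G.Adj v u

/-- `v ∈ S` totally `S`-defends `u ∉ S`. -/
def Defends (G : SimpleGraph V) (S : Set V) (v u : V) : Prop :=
  G.Adj u v ∧ TotalDom G ((S \ {v}) ∪ {u})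

/-- `S` is a secure total dominating set of `G`. -/
def STDS (G : SimpleGraph V) (S : Set V) : Prop :=
  TotalDom G S ∧ ∀ u ∉ S, ∃ v ∈ S, Defends G S v u

/-- `S` is a 2-dominating set of `G`. -/
def TwoDom (G : SimpleGraph V) (S : Set V) : Prop :=
  ∀ v ∉ S, 2 ≤ (S ∩ G.neighborSet v).ncard

/-- external private neighborhood of `v` with respect to `S`. -/
def epn (G : SimpleGraph V) (v : V) (S : Set V) : Set V :=
  {w | w ∉ S ∧ G.neighborSet w ∩ S = {v}}

/-- internal private neighborhood of `v` with respect to `S`. -/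
def ipn (G : SimpleGraph V) (v : V) (S : Set V) : Set V :=
  {u | u ∈ S ∧ G.neighborSet u ∩ S = {v}}

/-- secure total domination number. -/
noncomputable def gammaSt (G : SimpleGraph V) : ℕ :=
  sInf {n | ∃ S : Set V, STDS G S ∧ S.ncard = n}

/-- Every secure total dominating set is a 2-dominating set; consequently
`γ₂(G) ≤ γ_st(G)` (whenever an STDS exists). -/
theorem stds_is_twoDom_and_gamma2_le_gammaSt [Fintype V] (G : SimpleGraph V) :
    (∀ S : Set V, STDS G S → TwoDom G S) ∧
    ((∃ S : Set V, STDS G S) →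
      sInf {n | ∃ S : Set V, TwoDom G S ∧ S.ncard = n} ≤ gammaSt G) := by
  have main : ∀ S : Set V, STDS G S → TwoDom G S := by
    intro S hS v hv
    obtain ⟨w, hwS, hadj, hTD⟩ := hS.2 v hv
    obtain ⟨u, hu, huadj⟩ := hTD v
    have huv : u ≠ v := fun h => G.irrefl (h ▸ huadj)
    have huSw : u ∈ S \ {w} := by
      rcases hu with h | h
      · exact h
      · exact absurd h huv
    have huw : u ≠ w := huSw.2
    rw [show (2:ℕ) = 1 + 1 from rfl, Nat.add_one_le_iff, Set.one_lt_ncard_iff (Set.toFinite _)]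
    exact ⟨u, w, ⟨huSw.1, huadj⟩, ⟨hwS, hadj⟩, huw⟩
  refine ⟨main, fun ⟨S, hS⟩ => ?_⟩
  have hne : {n | ∃ S : Set V, STDS G S ∧ S.ncard = n}.Nonempty := ⟨S.ncard, S, hS, rfl⟩
  have hmem := Nat.sInf_mem hne
  obtain ⟨T, hT, hTn⟩ := hmem
  exact Nat.sInf_le ⟨T, main T hT, hTn⟩
end

section
/- If S is a secure total dominating set of a finite simple graph G and u is a vertex of degree 2 with u ∉ S, then both neighbors of u belong to S. -/
open SimpleGraph

variable {V : Type*}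

/-- If `S` is a secure total dominating set and `u ∉ S` has degree 2, then both
neighbors of `u` belong to `S`. -/
theorem deg_two_not_in_stds_neighbors_in (G : SimpleGraph V) (S : Set V)
    (hS : STDS G S) (u : V) (hu : u ∉ S) (hdeg : (G.neighborSet u).ncard = 2) :
    ∀ w : V, G.Adj u w → w ∈ S := by
  intro w hw
  by_contra hwS
  obtain ⟨v, hvS, hadj, hdef⟩ := hS.2 u hu
  have hvw : v ≠ w := fun h => hwS (h ▸ hvS)
  have hfin : (G.neighborSet u).Finite := by
    by_contra h
    rw [Set.Infinite.ncard (by simpa using h)] at hdeg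
    omega
  have hsub : ({v, w} : Set V) ⊆ G.neighborSet u := by
    intro x hx
    rcases hx with h | h
    · exact h ▸ hadj
    · exact h ▸ hw
  have heq : ({v, w} : Set V) = G.neighborSet u := by
    apply Set.eq_of_subset_of_ncard_le hsub _ hfin
    rw [hdeg, Set.ncard_pair hvw]
  obtain ⟨x, hxT, hxadj⟩ := hdef u
  have hx : x ∈ ({v, w} : Set V) := heq ▸ hxadj
  rcases hxT with ⟨hxS, hxv⟩ | hxu
  · rcases hx with h | h
    · exact hxv (Set.mem_singleton_iff.mpr h)
    · exact hwS (h ▸ hxS)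
  · exact G.irrefl (Set.mem_singleton_iff.mp hxu ▸ hxadj)
end

section
/- Every 2-dominating set of an outerplanar graph on n ≥ 3 vertices has at least ⌈(n+2)/3⌉ vertices, i.e., γ₂(G) ≥ ⌈(n+2)/3⌉. -/
/-! Choose, for every vertex outside `S`, two of its neighbours in `S`. These edges form a
subgraph `H ≤ G` in which the vertices outside `S` subdivide the edges of a multigraph on `S`
with `n - |S|` edges. A vertex of degree at most two in that multigraph can be deleted together
with its edges, so by induction either `n - |S| ≤ 2 |S| - 2` or some multigraph of minimum
degree three appears. In the latter case a longest path of `H` starting in `S` yields two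
vertices joined by three internally disjoint paths, a subdivision of `K₂,₃`, which an
outerplanar graph does not contain. -/

open SimpleGraph

variable {V : Type*}

/-- `G` contains a subgraph that is a subdivision of `K`:  there is an injective map of
branch vertices together with pairwise internally disjoint paths joining them. -/
def ContainsSubdivision {W : Type*} (K : SimpleGraph W) (G : SimpleGraph V) : Prop :=
  ∃ (f : W → V) (p : ∀ a b, K.Adj a b → G.Walk (f a) (f b)),
    Function.Injective f ∧
    (∀ a b (h : K.Adj a b), (p a b h).IsPath) ∧
    (∀ a b (h : K.Adj a b), ∀ w ∈ (p a b h).support, w ∈ Set.range f → w = f a ∨ w = f b) ∧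
    (∀ a b c d (h₁ : K.Adj a b) (h₂ : K.Adj c d), s(a, b) ≠ s(c, d) →
      ∀ w, w ∈ (p a b h₁).support → w ∈ (p c d h₂).support → w ∈ Set.range f)

/-- outerplanar graphs: no subdivision of `K₄` nor of `K₂,₃` as a subgraph. -/
def Outerplanar (G : SimpleGraph V) : Prop :=
  ¬ ContainsSubdivision (completeGraph (Fin 4)) G ∧
  ¬ ContainsSubdivision (completeBipartiteGraph (Fin 2) (Fin 3)) G

/-- maximal outerplanar graphs: adding any edge destroys outerplanarity. -/
def MaximalOuterplanar (G : SimpleGraph V) : Prop :=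
  Outerplanar G ∧
  ∀ u v : V, u ≠ v → ¬ G.Adj u v →
    ¬ Outerplanar (G ⊔ SimpleGraph.fromEdgeSet {s(u, v)})

section BipartiteSubdivision

variable {α β : Type*} {G : SimpleGraph V} {f₁ : α → V} {f₂ : β → V}

def bipartiteBranchPath (P : ∀ i j, G.Walk (f₁ i) (f₂ j)) :
    ∀ a b, (completeBipartiteGraph α β).Adj a b → G.Walk (Sum.elim f₁ f₂ a) (Sum.elim f₁ f₂ b)
  | .inl i, .inr j, _ => P i j
  | .inr j, .inl i, _ => (P i j).reverse
  | .inl _, .inl _, h => absurd h (by simp)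
  | .inr _, .inr _, h => absurd h (by simp)

theorem exists_bipartiteBranchPath_eq (P : ∀ i j, G.Walk (f₁ i) (f₂ j)) (a b : α ⊕ β)
    (h : (completeBipartiteGraph α β).Adj a b) :
    ∃ i j, s(a, b) = s(.inl i, .inr j) ∧
      (∀ w, w ∈ (bipartiteBranchPath P a b h).support ↔ w ∈ (P i j).support) ∧
      ((bipartiteBranchPath P a b h).IsPath ↔ (P i j).IsPath) := by
  rcases a with i | j <;> rcases b with i' | j'
  · simp at h
  · exact ⟨i, j', rfl, fun _ => Iff.rfl, Iff.rfl⟩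
  · exact ⟨i', j, Sym2.eq_swap, by simp [bipartiteBranchPath]⟩
  · simp at h

theorem containsSubdivision_completeBipartiteGraph (hf : Function.Injective (Sum.elim f₁ f₂))
    (P : ∀ i j, G.Walk (f₁ i) (f₂ j)) (hP : ∀ i j, (P i j).IsPath)
    (hends : ∀ i j, ∀ w ∈ (P i j).support, w ∈ Set.range (Sum.elim f₁ f₂) → w = f₁ i ∨ w = f₂ j)
    (hdisj : ∀ i j i' j', (i, j) ≠ (i', j') → ∀ w ∈ (P i j).support,
      w ∈ (P i' j').support → w ∈ Set.range (Sum.elim f₁ f₂)) :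
    ContainsSubdivision (completeBipartiteGraph α β) G := by
  refine ⟨Sum.elim f₁ f₂, bipartiteBranchPath P, hf, fun a b h => ?_, fun a b h w hw hwf => ?_,
    fun a b c d h h' hne w hw hw' => ?_⟩
  · obtain ⟨i, j, -, -, hpath⟩ := exists_bipartiteBranchPath_eq P a b h
    exact hpath.2 (hP i j)
  · obtain ⟨i, j, hab, hsupp, -⟩ := exists_bipartiteBranchPath_eq P a b h
    rcases Sym2.eq_iff.mp hab with ⟨rfl, rfl⟩ | ⟨rfl, rfl⟩
    · exact hends i j w ((hsupp w).1 hw) hwf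
    · exact (hends i j w ((hsupp w).1 hw) hwf).symm
  · obtain ⟨i, j, hab, hsupp, -⟩ := exists_bipartiteBranchPath_eq P a b h
    obtain ⟨i', j', hcd, hsupp', -⟩ := exists_bipartiteBranchPath_eq P c d h'
    refine hdisj i j i' j' ?_ w ((hsupp w).1 hw) ((hsupp' w).1 hw')
    rintro ⟨⟩
    exact hne (hab.trans hcd.symm)

end BipartiteSubdivision

def ContainsTheta (G : SimpleGraph V) : Prop :=
  ∃ (x y : V) (p₁ p₂ p₃ : G.Walk x y), x ≠ y ∧
    p₁.IsPath ∧ p₂.IsPath ∧ p₃.IsPath ∧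
    2 ≤ p₁.length ∧ 2 ≤ p₂.length ∧ 2 ≤ p₃.length ∧
    (∀ w ∈ p₁.support, w ∈ p₂.support → w = x ∨ w = y) ∧
    (∀ w ∈ p₁.support, w ∈ p₃.support → w = x ∨ w = y) ∧
    (∀ w ∈ p₂.support, w ∈ p₃.support → w = x ∨ w = y)

theorem ContainsTheta.mono {G G' : SimpleGraph V} (h : G ≤ G') (hG : ContainsTheta G) :
    ContainsTheta G' := by
  obtain ⟨x, y, p₁, p₂, p₃, hxy, h₁, h₂, h₃, l₁, l₂, l₃, d₁₂, d₁₃, d₂₃⟩ := hG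
  refine ⟨x, y, p₁.mapLe h, p₂.mapLe h, p₃.mapLe h, hxy, h₁.mapLe h, h₂.mapLe h, h₃.mapLe h,
    ?_, ?_, ?_, ?_, ?_, ?_⟩ <;>
    simpa only [Walk.length_mapLe, Walk.support_mapLe_eq_support]

theorem containsSubdivision_K23_of_fan {G : SimpleGraph V} {x y : V} (hxy : x ≠ y) (m : Fin 3 → V)
    (hxm : ∀ j, G.Adj x (m j)) (hmy : ∀ j, m j ≠ y) (q : ∀ j, G.Walk (m j) y)
    (hq : ∀ j, (q j).IsPath) (hxq : ∀ j, x ∉ (q j).support)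
    (hdisj : ∀ j k, j ≠ k → ∀ w ∈ (q j).support, w ∈ (q k).support → w = y) :
    ContainsSubdivision (completeBipartiteGraph (Fin 2) (Fin 3)) G := by
  have hm_notMem : ∀ j k, j ≠ k → m j ∉ (q k).support := fun j k hjk h =>
    hmy j (hdisj j k hjk _ (q j).start_mem_support h)
  let Q : ∀ (i : Fin 2) j, G.Walk (![x, y] i) (m j)
    | 0, j => (hxm j).toWalk
    | 1, j => (q j).reverse
  have hQ₀ : ∀ j, ∀ w ∈ (Q 0 j).support, w = x ∨ w = m j := fun j w hw => by simpa [Q] using hw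
  have hQ₁ : ∀ j, ∀ w ∈ (Q 1 j).support, w ∈ (q j).support := fun j w hw => by
    change w ∈ (q j).reverse.support at hw
    rwa [Walk.support_reverse, List.mem_reverse] at hw
  have hx : x ∈ Set.range (Sum.elim ![x, y] m) := ⟨.inl 0, rfl⟩
  have hm : ∀ j, m j ∈ Set.range (Sum.elim ![x, y] m) := fun j => ⟨.inr j, rfl⟩
  refine containsSubdivision_completeBipartiteGraph ?_ Q ?_ ?_ ?_
  · refine Function.Injective.sumElim ?_ (fun j k h => ?_) ?_
    · simp [Fin.forall_fin_two, Function.Injective, hxy, hxy.symm]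
    · by_contra hjk
      exact hm_notMem j k hjk (by rw [h]; exact (q k).start_mem_support)
    · simp [Fin.forall_fin_two, (hxm _).ne, (hmy _).symm]
  · simp only [Fin.forall_fin_two]
    exact ⟨fun j => (hxm j).isPath_toWalk, fun j => (hq j).reverse⟩
  · simp only [Fin.forall_fin_two]
    refine ⟨fun j w hw _ => hQ₀ j w hw, fun j w hw hwf => ?_⟩
    replace hw := hQ₁ j w hw
    obtain ⟨i | k, rfl⟩ := hwf
    · fin_cases i
      exacts [absurd hw (hxq j), Or.inl rfl]
    · by_cases hkj : k = j
      · exact Or.inr (hkj ▸ rfl)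
      · exact absurd hw (hm_notMem k j hkj)
  · have hQ₀_range : ∀ j, ∀ w ∈ (Q 0 j).support, w ∈ Set.range (Sum.elim ![x, y] m) :=
      fun j w hw => (hQ₀ j w hw).elim (· ▸ hx) (· ▸ hm j)
    rintro i j i' j' hne w hw hw'
    fin_cases i
    · exact hQ₀_range j w hw
    fin_cases i'
    · exact hQ₀_range j' w hw'
    have hjj' : j ≠ j' := by rintro rfl; exact hne rfl
    rw [hdisj j j' hjj' w (hQ₁ j w hw) (hQ₁ j' w hw')]
    exact ⟨.inl 1, rfl⟩

theorem ContainsTheta.containsSubdivision_K23 {G : SimpleGraph V} (h : ContainsTheta G) :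
    ContainsSubdivision (completeBipartiteGraph (Fin 2) (Fin 3)) G := by
  obtain ⟨x, y, p₁, p₂, p₃, hxy, h₁, h₂, h₃, l₁, l₂, l₃, d₁₂, d₁₃, d₂₃⟩ := h
  set P := ![p₁, p₂, p₃]
  have hP : ∀ j, (P j).IsPath := by simp [P, Fin.forall_fin_succ, h₁, h₂, h₃]
  have hlen : ∀ j, 2 ≤ (P j).length := by simp [P, Fin.forall_fin_succ, l₁, l₂, l₃]
  have hdisj : ∀ j k, j ≠ k → ∀ w ∈ (P j).support, w ∈ (P k).support → w = x ∨ w = y := by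
    intro j k hjk w hj hk
    fin_cases j <;> fin_cases k <;> simp [P] at hjk hj hk
    exacts [d₁₂ w hj hk, d₁₃ w hj hk, d₁₂ w hk hj, d₂₃ w hj hk, d₁₃ w hk hj, d₂₃ w hk hj]
  have hnil : ∀ j, ¬ (P j).Nil := fun j h => by
    have := hlen j
    rw [Walk.length_eq_zero_iff.mpr h] at this
    omega
  have htail : ∀ j, (P j).tail.IsPath ∧ x ∉ (P j).tail.support := fun j => by
    rw [← Walk.cons_isPath_iff ((P j).adj_snd (hnil j)), Walk.cons_tail_eq _ (hnil j)]
    exact hP j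
  have hmem : ∀ j, ∀ w ∈ (P j).tail.support, w ∈ (P j).support := fun j w hw => by
    rw [Walk.support_tail_of_not_nil _ (hnil j)] at hw
    exact List.mem_of_mem_tail hw
  refine containsSubdivision_K23_of_fan hxy (fun j => (P j).snd) (fun j => (P j).adj_snd (hnil j))
    (fun j h => ?_) (fun j => (P j).tail) (fun j => (htail j).1) (fun j => (htail j).2)
    (fun j k hjk w hj hk => ?_)
  · have := ((hP j).getVert_eq_end_iff (by have := hlen j; omega)).mp h
    have := hlen j
    omega
  · exact (hdisj j k hjk w (hmem j w hj) (hmem k w hk)).resolve_left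
      (ne_of_mem_of_not_mem hj (htail j).2)

namespace SimpleGraph.Walk

variable {G : SimpleGraph V} {u v w : V}

theorem two_le_length_of_not_adj (p : G.Walk u v) (huv : u ≠ v) (h : ¬ G.Adj u v) :
    2 ≤ p.length := by
  by_contra! hp
  interval_cases hl : p.length
  · exact huv (eq_of_length_eq_zero hl)
  · exact h (adj_of_length_eq_one hl)

theorem IsPath.append_of_inter {p : G.Walk u v} {q : G.Walk v w} (hp : p.IsPath) (hq : q.IsPath)
    (hpq : ∀ z ∈ p.support, z ∈ q.support → z = v) : (p.append q).IsPath := by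
  have hq' := hq.support_nodup
  rw [← cons_tail_support q, List.nodup_cons] at hq'
  rw [isPath_def, support_append, List.nodup_append]
  refine ⟨hp.support_nodup, hq'.2, fun a ha b hb hab => hq'.1 ?_⟩
  subst hab
  exact hpq a ha (List.mem_of_mem_tail hb) ▸ hb

theorem IsPath.eq_snd_or_eq_end_of_forall_adj {p : G.Walk u v} (hp : p.IsPath) {b o : V}
    (hb : b ∈ p.support) (hbu : b ≠ u) (hnb : ∀ z, G.Adj b z → z = u ∨ z = o) :
    b = p.snd ∨ b = v := by
  obtain ⟨i, rfl, hi⟩ := mem_support_iff_exists_getVert.mp hb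
  have hi0 : i ≠ 0 := by rintro rfl; exact hbu (getVert_zero _)
  by_contra! h
  have hi1 : i ≠ 1 := by rintro rfl; exact h.1 rfl
  have hil : i ≠ p.length := by rintro rfl; exact h.2 (getVert_length _)
  have hpred : G.Adj (p.getVert i) (p.getVert (i - 1)) := by
    have := p.adj_getVert_succ (i := i - 1) (by omega)
    rwa [Nat.sub_add_cancel (by omega), adj_comm] at this
  have hsucc := p.adj_getVert_succ (i := i) (by omega)
  have hne_start : ∀ k, k ≠ 0 → k ≤ p.length → p.getVert k ≠ u := fun k hk hkl h =>
    hk ((hp.getVert_eq_start_iff hkl).mp h)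
  have h₁ := (hnb _ hpred).resolve_left (hne_start _ (by omega) (by omega))
  have h₂ := (hnb _ hsucc).resolve_left (hne_start _ (by omega) (by omega))
  have := hp.getVert_injOn (by simp only [Set.mem_ofPred_eq]; omega)
    (by simp only [Set.mem_ofPred_eq]; omega) (h₁.trans h₂.symm)
  omega

variable [DecidableEq V]

theorem IsPath.eq_of_mem_takeUntil_of_mem_dropUntil {p : G.Walk u v} (hp : p.IsPath)
    (hw : w ∈ p.support) {z : V} (ht : z ∈ (p.takeUntil w hw).support)
    (hd : z ∈ (p.dropUntil w hw).support) : z = w := by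
  by_contra hzw
  rw [← take_spec p hw] at hp
  exact hp.ne_of_mem_support_of_append hzw ht hd rfl

theorem mem_takeUntil_or_mem_dropUntil (p : G.Walk u v) (hw : w ∈ p.support) {z : V}
    (hz : z ∈ p.support) : z ∈ (p.takeUntil w hw).support ∨ z ∈ (p.dropUntil w hw).support := by
  rwa [← mem_support_append_iff, take_spec]

theorem mem_dropUntil_or_mem_dropUntil {p : G.Walk u v} {s t : V} (hs : s ∈ p.support)
    (ht : t ∈ p.support) : t ∈ (p.dropUntil s hs).support ∨ s ∈ (p.dropUntil t ht).support := by
  refine or_iff_not_imp_left.mpr fun htd => ?_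
  have htt := (p.mem_takeUntil_or_mem_dropUntil hs ht).resolve_right htd
  have hts : t ≠ s := by rintro rfl; exact htd (start_mem_support _)
  have := notMem_support_takeUntil_support_takeUntil_subset hts hs htt
  exact (p.mem_takeUntil_or_mem_dropUntil ht hs).resolve_left this

end SimpleGraph.Walk

section Bypasses

variable [DecidableEq V] {H : SimpleGraph V} {y x : V} {p : H.Walk y x}

-- The three paths from `y` to `s`: along `p`, through `b`, and along `r` then back along `p`.
theorem containsTheta_of_path_of_bypasses (hp : p.IsPath) {s b z : V} (hs : s ∈ p.support)
    (hys : y ≠ s) (hnadj : ¬ H.Adj y s) (hyb : H.Adj y b) (hbs : H.Adj b s) (hbp : b ∉ p.support)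
    (hz : z ∈ (p.dropUntil s hs).support) (r : H.Walk y z) (hr : r.IsPath)
    (hrp : ∀ w ∈ r.support, w ∈ p.support → w = y ∨ w = z) (hbr : b ∉ r.support) :
    ContainsTheta H := by
  set t := p.takeUntil s hs
  set d := p.dropUntil s hs
  set e := (d.takeUntil z hz).reverse
  have hdp : ∀ w ∈ d.support, w ∈ p.support := fun w hw => p.support_dropUntil_subset_support hs hw
  have hed : ∀ w ∈ e.support, w ∈ d.support := fun w hw => by
    rw [Walk.support_reverse, List.mem_reverse] at hw
    exact d.support_takeUntil_subset_support hz hw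
  have htd : ∀ w ∈ t.support, w ∈ d.support → w = s := fun w =>
    hp.eq_of_mem_takeUntil_of_mem_dropUntil hs
  have hyd : y ∉ d.support := fun h => hys (htd y t.start_mem_support h)
  have hP₂ : ∀ w ∈ (Walk.cons hyb (Walk.cons hbs Walk.nil)).support, w = y ∨ w = b ∨ w = s := by
    simp
  refine ⟨y, s, t, Walk.cons hyb (Walk.cons hbs Walk.nil), r.append e, hys, hp.takeUntil hs,
    ?_, hr.append_of_inter ((hp.dropUntil hs).takeUntil hz).reverse fun w hwr hwe => ?_,
    t.two_le_length_of_not_adj hys hnadj, by simp, (r.append e).two_le_length_of_not_adj hys hnadj,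
    fun w hwt hw => ?_, fun w hwt hw => ?_, fun w hw hw' => ?_⟩
  · simp [hyb.ne, hbs.ne, hys]
  · exact ((hrp w hwr (hdp w (hed w hwe))).resolve_left (ne_of_mem_of_not_mem (hed w hwe) hyd))
  · rcases hP₂ w hw with rfl | rfl | rfl
    · exact Or.inl rfl
    · exact absurd (p.support_takeUntil_subset_support hs hwt) hbp
    · exact Or.inr rfl
  · rcases (Walk.mem_support_append_iff r e).mp hw with hwr | hwe
    · rcases hrp w hwr (p.support_takeUntil_subset_support hs hwt) with rfl | rfl
      · exact Or.inl rfl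
      · exact Or.inr (htd w hwt hz)
    · exact Or.inr (htd w hwt (hed w hwe))
  · rcases hP₂ w hw with rfl | rfl | rfl
    · exact Or.inl rfl
    · rcases (Walk.mem_support_append_iff r e).mp hw' with hwr | hwe
      · exact absurd hwr hbr
      · exact absurd (hdp w (hed w hwe)) hbp
    · exact Or.inr rfl

theorem containsTheta_of_two_detours (hp : p.IsPath) {b b' o o' : V} (hbb' : b ≠ b')
    (hbp : b ∉ p.support) (hb'p : b' ∉ p.support) (hyb : H.Adj y b) (hyb' : H.Adj y b')
    (hbo : H.Adj b o) (hb'o' : H.Adj b' o') (ho : o ∈ p.support) (ho' : o' ∈ p.support)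
    (hyo : y ≠ o) (hyo' : y ≠ o') (hno : ¬ H.Adj y o) (hno' : ¬ H.Adj y o') : ContainsTheta H := by
  wlog hz : o' ∈ (p.dropUntil o ho).support generalizing b b' o o'
  · exact this hbb'.symm hb'p hbp hyb' hyb hb'o' hbo ho' ho hyo' hyo hno' hno
      ((Walk.mem_dropUntil_or_mem_dropUntil ho ho').resolve_left hz)
  refine containsTheta_of_path_of_bypasses hp ho hyo hno hyb hbo hbp hz
    (.cons hyb' (.cons hb'o' .nil)) (by simp [hyb'.ne, hb'o'.ne, hyo']) ?_ ?_
  · simp only [Walk.support_cons, Walk.support_nil, List.mem_cons, List.not_mem_nil, or_false]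
    rintro w (rfl | rfl | rfl) hw
    exacts [Or.inl rfl, absurd hw hb'p, Or.inr rfl]
  · simp only [Walk.support_cons, Walk.support_nil, List.mem_cons, List.not_mem_nil, or_false,
      not_or]
    exact ⟨hyb.ne.symm, hbb', (ne_of_mem_of_not_mem ho' hbp).symm⟩

theorem containsTheta_of_detour_of_adj (hp : p.IsPath) (hyx : H.Adj y x) {b o : V}
    (hbp : b ∉ p.support) (hyb : H.Adj y b) (hbo : H.Adj b o) (ho : o ∈ p.support)
    (hyo : y ≠ o) (hno : ¬ H.Adj y o) : ContainsTheta H := by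
  refine containsTheta_of_path_of_bypasses hp ho hyo hno hyb hbo hbp (Walk.end_mem_support _)
    hyx.toWalk hyx.isPath_toWalk (by simp) ?_
  simp only [Adj.toWalk, Walk.support_cons, Walk.support_nil, List.mem_cons, List.not_mem_nil,
    or_false, not_or]
  exact ⟨hyb.ne.symm, (ne_of_mem_of_not_mem p.end_mem_support hbp).symm⟩

end Bypasses

theorem exists_isPath_forall_length_le [Fintype V] (H : SimpleGraph V) {S : Set V}
    (hS : S.Nonempty) : ∃ y ∈ S, ∃ x, ∃ p : H.Walk y x, p.IsPath ∧
      ∀ y' ∈ S, ∀ x', ∀ q : H.Walk y' x', q.IsPath → q.length ≤ p.length := by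
  set L := {l | ∃ y ∈ S, ∃ x, ∃ p : H.Walk y x, p.IsPath ∧ p.length = l}
  have hL : BddAbove L := ⟨Fintype.card V, by rintro _ ⟨y, -, x, p, hp, rfl⟩; exact hp.length_lt.le⟩
  obtain ⟨y, hy, x, p, hp, hlen⟩ : sSup L ∈ L :=
    Nat.sSup_mem (hS.elim fun y hy => ⟨0, y, hy, y, .nil, .nil, rfl⟩) hL
  exact ⟨y, hy, x, p, hp, fun y' hy' x' q hq => hlen ▸ le_csSup hL ⟨y', hy', x', q, hq, rfl⟩⟩

-- `H` is a multigraph on `S` with each edge subdivided once, by its own vertex of `B`.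
def SubdividesMultigraph (H : SimpleGraph V) (S B : Set V) : Prop :=
  (∀ u ∈ S, ∀ v ∈ S, ¬ H.Adj u v) ∧
    ∀ b ∈ B, ∃ u ∈ S, ∃ v ∈ S, u ≠ v ∧ H.neighborSet b = {u, v}

namespace SubdividesMultigraph

open Finset

variable {H : SimpleGraph V}

theorem exists_other_neighbor {S B : Set V} (h : SubdividesMultigraph H S B) {b y : V} (hb : b ∈ B)
    (hby : H.Adj b y) : ∃ o ∈ S, o ≠ y ∧ H.Adj b o ∧ ∀ z, H.Adj b z → z = y ∨ z = o := by
  obtain ⟨u, hu, v, hv, huv, hN⟩ := h.2 b hb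
  have hnbr : ∀ z, H.Adj b z ↔ z = u ∨ z = v := fun z => by
    rw [← mem_neighborSet, hN, Set.mem_insert_iff, Set.mem_singleton_iff]
  rcases (hnbr y).mp hby with rfl | rfl
  · exact ⟨v, hv, huv.symm, (hnbr v).mpr (Or.inr rfl), fun z hz => (hnbr z).mp hz⟩
  · exact ⟨u, hu, huv, (hnbr u).mpr (Or.inl rfl), fun z hz => ((hnbr z).mp hz).symm⟩

theorem diff_singleton {S B : Set V} (h : SubdividesMultigraph H S B) (v : V) :
    SubdividesMultigraph H (S \ {v}) {b ∈ B | ¬ H.Adj v b} := by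
  refine ⟨fun u hu w hw => h.1 u hu.1 w hw.1, fun b ⟨hb, hvb⟩ => ?_⟩
  obtain ⟨u, hu, w, hw, huw, hN⟩ := h.2 b hb
  have hv : v ∉ H.neighborSet b := fun h' => hvb (H.adj_symm h')
  refine ⟨u, ⟨hu, ?_⟩, w, ⟨hw, ?_⟩, huw, hN⟩ <;> rintro rfl <;> exact hv (by simp [hN])

theorem containsTheta [Fintype V] [DecidableEq V] [DecidableRel H.Adj] {S B : Finset V}
    (h : SubdividesMultigraph H S B) (hS : S.Nonempty) (hdeg : ∀ v ∈ S, 2 < #{b ∈ B | H.Adj v b}) : ContainsTheta H := by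
  obtain ⟨y, hy, x, p, hp, hmax⟩ := exists_isPath_forall_length_le H (S := S) hS
  set N := {b ∈ B | H.Adj y b}
  have hN : ∀ b ∈ N, b ∈ B ∧ H.Adj y b := fun b hb => mem_filter.mp hb
  choose! o hoS hoy hbo hnb using fun b hb =>
    h.exists_other_neighbor (hN b hb).1 (hN b hb).2.symm
  have hoff : ∀ b ∈ N, b ∉ p.support → o b ∈ p.support := by
    intro b hb hbp
    by_contra hop
    have hq : (Walk.cons (hbo b hb).symm (Walk.cons (hN b hb).2.symm p)).IsPath := by
      simp only [Walk.cons_isPath_iff, Walk.support_cons, List.mem_cons, not_or]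
      exact ⟨⟨hp, hbp⟩, (hbo b hb).ne.symm, hop⟩
    have := hmax _ (hoS b hb) _ _ hq
    simp only [Walk.length_cons] at this
    omega
  have hsub : {b ∈ N | b ∈ p.support} ⊆ {p.snd, x} := fun b hb => by
    rw [mem_filter] at hb
    simpa using hp.eq_snd_or_eq_end_of_forall_adj hb.2 (hN b hb.1).2.ne.symm (hnb b hb.1)
  have hsplit : #{b ∈ N | b ∈ p.support} + #{b ∈ N | b ∉ p.support} = #N :=
    card_filter_add_card_filter_not _
  have hon_card : #{b ∈ N | b ∈ p.support} ≤ 2 := (card_le_card hsub).trans card_le_two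
  have hN3 : 2 < #N := hdeg y hy
  rcases Nat.lt_or_ge 1 #{b ∈ N | b ∉ p.support} with hoff2 | hoff1
  · obtain ⟨b, hb, b', hb', hbb'⟩ := one_lt_card.mp hoff2
    rw [mem_filter] at hb hb'
    exact containsTheta_of_two_detours hp hbb' hb.2 hb'.2 (hN b hb.1).2 (hN b' hb'.1).2
      (hbo b hb.1) (hbo b' hb'.1) (hoff b hb.1 hb.2) (hoff b' hb'.1 hb'.2) (hoy b hb.1).symm
      (hoy b' hb'.1).symm (h.1 y hy _ (hoS b hb.1)) (h.1 y hy _ (hoS b' hb'.1))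
  · have hoff_pos : 0 < #{b ∈ N | b ∉ p.support} := by omega
    obtain ⟨b, hb⟩ := card_pos.mp hoff_pos
    rw [mem_filter] at hb
    have hOn : {b ∈ N | b ∈ p.support} = {p.snd, x} :=
      eq_of_subset_of_card_le hsub (card_le_two.trans (by omega))
    have hxN : x ∈ N := (mem_filter.mp (hOn ▸ mem_insert_of_mem (mem_singleton_self x))).1
    exact containsTheta_of_detour_of_adj hp (hN x hxN).2 hb.2 (hN b hb.1).2 (hbo b hb.1)
      (hoff b hb.1 hb.2) (hoy b hb.1).symm (h.1 y hy _ (hoS b hb.1))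

theorem containsTheta_or_card_add_two_le [Fintype V] [DecidableEq V] [DecidableRel H.Adj]
    {S B : Finset V} (h : SubdividesMultigraph H S B)
    (hB : B.Nonempty) : ContainsTheta H ∨ #B + 2 ≤ 2 * #S := by
  induction S using Finset.strongInduction generalizing B with
  | H S ih =>
  obtain ⟨u, hu, w, hw, huw, -⟩ := h.2 _ hB.choose_spec
  have hS2 : 2 ≤ #S := one_lt_card.mpr ⟨u, hu, w, hw, huw⟩
  by_cases hlow : ∃ v ∈ S, #{b ∈ B | H.Adj v b} ≤ 2
  · obtain ⟨v, hv, hv2⟩ := hlow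
    have hsplit : #{b ∈ B | H.Adj v b} + #{b ∈ B | ¬ H.Adj v b} = #B :=
      card_filter_add_card_filter_not _
    have h' : SubdividesMultigraph H ↑(S.erase v) ↑{b ∈ B | ¬ H.Adj v b} := by
      simpa only [coe_erase, coe_filter, mem_coe] using h.diff_singleton v
    rcases {b ∈ B | ¬ H.Adj v b}.eq_empty_or_nonempty with hB' | hB'
    · rw [hB', card_empty] at hsplit
      omega
    · have := card_erase_of_mem hv
      exact (ih _ (erase_ssubset hv) h' hB').imp_right fun _ => by omega
  · push Not at hlow
    exact .inl (h.containsTheta ⟨u, hu⟩ hlow)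

end SubdividesMultigraph

theorem TwoDom.exists_subdividesMultigraph {G : SimpleGraph V} {S : Set V} (hS : TwoDom G S) :
    ∃ H ≤ G, SubdividesMultigraph H S Sᶜ := by
  choose! n₁ hn₁ n₂ hn₂ hne using fun x (hx : x ∉ S) =>
    (Set.one_lt_ncard_iff_nontrivial_and_finite.mp (hS x hx)).1
  refine ⟨fromRel fun x w => x ∉ S ∧ (w = n₁ x ∨ w = n₂ x), ?_, ?_, fun b hb => ?_⟩
  · rintro x w ⟨-, ⟨hx, rfl | rfl⟩ | ⟨hw, rfl | rfl⟩⟩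
    exacts [(hn₁ x hx).2, (hn₂ x hx).2, (hn₁ w hw).2.symm, (hn₂ w hw).2.symm]
  · rintro u hu v hv ⟨-, ⟨hu', -⟩ | ⟨hv', -⟩⟩
    exacts [hu' hu, hv' hv]
  · refine ⟨n₁ b, (hn₁ b hb).1, n₂ b, (hn₂ b hb).1, hne b hb, Set.ext fun w => ?_⟩
    simp only [mem_neighborSet, fromRel_adj, Set.mem_insert_iff, Set.mem_singleton_iff]
    constructor
    · rintro ⟨-, ⟨-, h⟩ | ⟨hw, rfl | rfl⟩⟩
      exacts [h, absurd (hn₁ w hw).1 hb, absurd (hn₂ w hw).1 hb]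
    · refine fun h => ⟨?_, .inl ⟨hb, h⟩⟩
      rintro rfl
      rcases h with h | h
      exacts [hb (h ▸ (hn₁ _ hb).1), hb (h ▸ (hn₂ _ hb).1)]

/-- Every 2-dominating set of an outerplanar graph on `n ≥ 3` vertices has at least
`⌈(n+2)/3⌉ = (n+4)/3` vertices. -/
theorem twoDom_lower_bound_outerplanar [Fintype V] (G : SimpleGraph V)
    (hG : Outerplanar G) (hn : 3 ≤ Fintype.card V)
    (S : Set V) (hS : TwoDom G S) :
    (Fintype.card V + 4) / 3 ≤ S.ncard := by
  classical
  obtain ⟨H, hHG, hH⟩ := hS.exists_subdividesMultigraph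
  have hT : SubdividesMultigraph H ↑S.toFinset ↑S.toFinsetᶜ := by simpa using hH
  have hcard : S.toFinset.card + S.toFinsetᶜ.card = Fintype.card V :=
    Finset.card_add_card_compl _
  rw [Set.ncard_eq_toFinset_card']
  rcases S.toFinsetᶜ.eq_empty_or_nonempty with hB | hB
  · rw [hB, Finset.card_empty] at hcard
    omega
  · rcases hT.containsTheta_or_card_add_two_le hB with hθ | hle
    · exact absurd (hθ.mono hHG).containsSubdivision_K23 hG.2
    · omega
end

section
/- Let G be an outerplanar graph, let S be a 2-dominating set of G with |S| = x, and let T = V(G) \ S with |T| = y. Then y ≤ 2x − 2. -/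
/-!
For every `t ∉ S` choose two neighbours of `t` in `S`, and let `H` be the graph on `S` whose edges
are the chosen pairs, the weight `w e` of an edge being the number of `t` that chose it; then
`|V \ S| = ∑ w`. Subdividing every edge of `H` by a vertex that chose it embeds a subdivision of
`H` in `G`, so `H` has no subdivision of `K₄`. Three vertices choosing the same pair `uv`, or two
choosing it while `uv` lies on a cycle of `H`, give a subdivision of `K₂,₃` in `G`; so `w ≤ 2`
and edges of weight `2` are bridges. A graph on `n` vertices without a subdivision of `K₄` has at
most `2n - 3` edges (a vertex of degree at most `3` can be deleted or suppressed), and splitting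
`H` along its bridges of weight `2` turns this into `∑ w ≤ 2n - 2 ≤ 2|S| - 2`.
-/

open SimpleGraph

variable {V : Type*}

local notation "K₄" => completeGraph (Fin 4)
local notation "K₂₃" => completeBipartiteGraph (Fin 2) (Fin 3)

namespace ContainsSubdivision

variable {W : Type*} {K : SimpleGraph W} {G H : SimpleGraph V}

theorem mono (hHG : H ≤ G) : ContainsSubdivision K H → ContainsSubdivision K G := by
  rintro ⟨f, p, hf, hpath, hint, hdisj⟩
  refine ⟨f, fun a b h ↦ (p a b h).mapLe hHG, hf, fun a b h ↦ (hpath a b h).mapLe hHG, ?_, ?_⟩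
    <;> simpa only [Walk.support_mapLe_eq_support]

theorem of_isContained (h : K ⊑ G) : ContainsSubdivision K G := by
  obtain ⟨f⟩ := h
  refine ⟨f, fun a b h ↦ (f.toHom.map_adj h).toWalk, f.injective, fun a b h ↦ ?_, ?_, ?_⟩
  · simpa using (f.toHom.map_adj h).ne
  · simp
  · intro a b c d _ _ _ x hx _
    obtain rfl | rfl : x = f a ∨ x = f b := by simpa using hx
    exacts [⟨a, rfl⟩, ⟨b, rfl⟩]

theorem of_adj_of_path {f : W → V} (hf : f.Injective) {a₀ b₀ : W}
    (hadj : ∀ a b, K.Adj a b → s(a, b) ≠ s(a₀, b₀) → G.Adj (f a) (f b))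
    (P : G.Walk (f a₀) (f b₀)) (hP : P.IsPath)
    (hPf : ∀ w ∈ P.support, w ∈ Set.range f → w = f a₀ ∨ w = f b₀) :
    ContainsSubdivision K G := by
  classical
  let p : ∀ a b, K.Adj a b → G.Walk (f a) (f b) := fun a b h ↦
    if h₁ : a = a₀ ∧ b = b₀ then P.copy (by rw [h₁.1]) (by rw [h₁.2])
    else if h₂ : a = b₀ ∧ b = a₀ then P.reverse.copy (by rw [h₂.1]) (by rw [h₂.2])
    else (hadj a b h (by simp only [ne_eq, Sym2.eq_iff]; tauto)).toWalk
  have hp : ∀ a b (h : K.Adj a b), (p a b h).IsPath ∧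
      (∀ w ∈ (p a b h).support, w ∈ Set.range f → w = f a ∨ w = f b) ∧
      (s(a, b) ≠ s(a₀, b₀) → ∀ w ∈ (p a b h).support, w ∈ Set.range f) := by
    intro a b h
    simp only [p]
    split_ifs with h₁ h₂
    · obtain ⟨rfl, rfl⟩ := h₁
      exact ⟨by simpa using hP, by simpa using hPf, fun h ↦ (h rfl).elim⟩
    · obtain ⟨rfl, rfl⟩ := h₂
      refine ⟨by simpa using hP.reverse, fun w hw hwf ↦ ?_, fun h ↦ absurd Sym2.eq_swap h⟩
      simp only [Walk.support_copy, Walk.support_reverse, List.mem_reverse] at hw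
      exact (hPf w hw hwf).symm
    · have hne : s(a, b) ≠ s(a₀, b₀) := by simp only [ne_eq, Sym2.eq_iff]; tauto
      exact ⟨by simpa using (hadj a b h hne).ne, by simp, by simp⟩
  refine ⟨f, p, hf, fun a b h ↦ (hp a b h).1, fun a b h ↦ (hp a b h).2.1, ?_⟩
  intro a b c d h₁ h₂ hne w hw₁ hw₂
  by_cases hab : s(a, b) = s(a₀, b₀)
  · exact (hp c d h₂).2.2 (hab ▸ hne).symm w hw₂
  · exact (hp a b h₁).2.2 hab w hw₁

end ContainsSubdivision

variable {G : SimpleGraph V} in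
theorem containsSubdivision_K23_of_path {a b t₁ t₂ z : V} (h₁₂ : t₁ ≠ t₂) (hzb : z ≠ b)
    (ha₁ : G.Adj a t₁) (hb₁ : G.Adj b t₁) (ha₂ : G.Adj a t₂) (hb₂ : G.Adj b t₂)
    (haz : G.Adj a z) (P : G.Walk z b) (hP : P.IsPath) (haP : a ∉ P.support)
    (h₁P : t₁ ∉ P.support) (h₂P : t₂ ∉ P.support) : ContainsSubdivision K₂₃ G := by
  have hab : a ≠ b := fun h ↦ haP (h ▸ P.end_mem_support)
  have h₁z : t₁ ≠ z := fun h ↦ h₁P (h ▸ P.start_mem_support)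
  have h₂z : t₂ ≠ z := fun h ↦ h₂P (h ▸ P.start_mem_support)
  have hf : (Sum.elim ![a, b] ![t₁, t₂, z]).Injective := by
    rintro (i | i) (j | j) h <;> fin_cases i <;> fin_cases j <;>
      simp_all [ha₁.ne, hb₁.ne, ha₂.ne, hb₂.ne, haz.ne, ha₁.ne', hb₁.ne', ha₂.ne', hb₂.ne', haz.ne']
  -- branch vertices `a, b` and `t₁, t₂, z`; the edge `z b` is the one stretched into `P`
  refine ContainsSubdivision.of_adj_of_path hf (a₀ := .inr 2) (b₀ := .inl 1) ?_ P hP ?_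
  · rintro (i | i) (j | j) h hne <;> fin_cases i <;> fin_cases j <;>
      simp_all [Sym2.eq_swap, adj_comm]
  · rintro w hw ⟨i | i, rfl⟩ <;> fin_cases i <;> simp_all

variable {G : SimpleGraph V} in
theorem containsSubdivision_K23_of_adj {a b t₁ t₂ t₃ : V} (hab : a ≠ b) (h₁₂ : t₁ ≠ t₂)
    (h₁₃ : t₁ ≠ t₃) (h₂₃ : t₂ ≠ t₃) (ha₁ : G.Adj a t₁) (hb₁ : G.Adj b t₁) (ha₂ : G.Adj a t₂)
    (hb₂ : G.Adj b t₂) (ha₃ : G.Adj a t₃) (hb₃ : G.Adj b t₃) : ContainsSubdivision K₂₃ G :=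
  containsSubdivision_K23_of_path h₁₂ hb₃.ne' ha₁ hb₁ ha₂ hb₂ ha₃ hb₃.symm.toWalk
    hb₃.symm.isPath_toWalk (by simp [ha₃.ne, hab]) (by simp [h₁₃, hb₁.ne']) (by simp [h₂₃, hb₂.ne'])

/-- `G` contains `H` with some edges subdivided once: the edge `ab` of `H` is an edge of `G` if
`mid s(a, b) = none`, and is replaced by the path `a t b` of `G` if `mid s(a, b) = some t`. -/
structure IsSubdivisionMap (G H : SimpleGraph V) (mid : Sym2 V → Option V) : Prop where
  adj : ∀ ⦃a b⦄, H.Adj a b → (mid s(a, b)).elim (G.Adj a b) fun t ↦ G.Adj a t ∧ G.Adj t b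
  notMem_support : ∀ e ∈ H.edgeSet, ∀ t, mid e = some t → t ∉ H.support
  injOn : ∀ e ∈ H.edgeSet, ∀ e' ∈ H.edgeSet, ∀ t, mid e = some t → mid e' = some t → e = e'

namespace IsSubdivisionMap

variable {G H D : SimpleGraph V} {mid : Sym2 V → Option V}

theorem mono (hm : IsSubdivisionMap G H mid) (hD : D ≤ H) : IsSubdivisionMap G D mid where
  adj _ _ h := hm.adj (hD h)
  notMem_support e he t ht hs := hm.notMem_support e (edgeSet_mono hD he) t ht (support_mono hD hs)
  injOn e he e' he' := hm.injOn e (edgeSet_mono hD he) e' (edgeSet_mono hD he')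

def expandWalk (hm : IsSubdivisionMap G H mid) : ∀ {a b : V}, H.Walk a b → G.Walk a b
  | _, _, .nil => .nil
  | a, _, .cons (v := c) h q =>
    match mid s(a, c), hm.adj h with
    | none, hac => .cons hac (hm.expandWalk q)
    | some _, ⟨hat, htc⟩ => .cons hat (.cons htc (hm.expandWalk q))

theorem mem_support_expandWalk (hm : IsSubdivisionMap G H mid) {a b x : V} (p : H.Walk a b) :
    x ∈ (hm.expandWalk p).support ↔ x ∈ p.support ∨ ∃ e ∈ p.edges, mid e = some x := by
  induction p with
  | nil => simp [expandWalk]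
  | @cons a c b h q ih =>
    simp only [expandWalk]
    split <;> simp_all <;> grind

theorem isPath_expandWalk (hm : IsSubdivisionMap G H mid) {a b : V} {p : H.Walk a b}
    (hp : p.IsPath) : (hm.expandWalk p).IsPath := by
  induction p with
  | nil => simp [expandWalk]
  | @cons a c b h q ih =>
    rw [Walk.cons_isPath_iff] at hp
    have hmid : ∀ e ∈ (Walk.cons h q).edges, ∀ t, mid e = some t → t ∉ (Walk.cons h q).support :=
      fun e he t ht hts ↦ hm.notMem_support e ((Walk.cons h q).edges_subset_edgeSet he) t ht
        (mem_support_of_mem_walk_support _ Walk.not_nil_cons hts)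
    have ha : a ∉ (hm.expandWalk q).support := by
      rw [mem_support_expandWalk]
      rintro (ha | ⟨e, he, hae⟩)
      · exact hp.2 ha
      · exact hmid e (by simp [he]) a hae (by simp)
    simp only [expandWalk]
    split
    · exact (ih hp.1).cons ha
    · rename_i t _ _ ht _
      have ht' : t ∉ (hm.expandWalk q).support := by
        rw [mem_support_expandWalk]
        rintro (htq | ⟨e, he, hte⟩)
        · exact hmid _ (by simp) t ht (by simp [htq])
        · have := hm.injOn e (q.edges_subset_edgeSet he) _ (by simpa using h) t hte ht
          exact hp.2 (q.fst_mem_support_of_mem_edges (this ▸ he))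
      refine ((ih hp.1).cons ht').cons ?_
      simp only [Walk.support_cons, List.mem_cons, not_or]
      exact ⟨fun hat ↦ hmid _ (by simp) t ht (by simp [← hat]), ha⟩

end IsSubdivisionMap

namespace ContainsSubdivision

variable {W : Type*} {K : SimpleGraph W} {G H : SimpleGraph V} {mid : Sym2 V → Option V}

theorem of_isSubdivisionMap (hm : IsSubdivisionMap G H mid) (hK : K.support = Set.univ)
    (h : ContainsSubdivision K H) : ContainsSubdivision K G := by
  obtain ⟨f, p, hf, hpath, hint, hdisj⟩ := h
  have hsupp : ∀ a b h, ∀ x ∈ (p a b h).support, x ∈ H.support := fun a b h _ ↦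
    mem_support_of_mem_walk_support _ (Walk.not_nil_of_ne (hf.ne h.ne))
  have hmid : ∀ a b h, ∀ e ∈ (p a b h).edges, ∀ x, mid e = some x → x ∉ H.support :=
    fun a b h e he ↦ hm.notMem_support e ((p a b h).edges_subset_edgeSet he)
  refine ⟨f, fun a b h ↦ hm.expandWalk (p a b h), hf,
    fun a b h ↦ hm.isPath_expandWalk (hpath a b h), fun a b h x hx hxf ↦ ?_,
    fun a b c d h₁ h₂ hne x hx₁ hx₂ ↦ ?_⟩
  · rcases (hm.mem_support_expandWalk _).1 hx with hx | ⟨e, he, hxe⟩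
    · exact hint a b h x hx hxf
    · obtain ⟨c, rfl⟩ := hxf
      obtain ⟨d, hcd⟩ : c ∈ K.support := hK ▸ Set.mem_univ c
      exact absurd (hsupp c d hcd _ (p c d hcd).start_mem_support) (hmid a b h e he _ hxe)
  rw [hm.mem_support_expandWalk] at hx₁ hx₂
  rcases hx₁ with hx₁ | ⟨e, he, hxe⟩ <;> rcases hx₂ with hx₂ | ⟨e', he', hxe'⟩
  · exact hdisj a b c d h₁ h₂ hne x hx₁ hx₂
  · exact absurd (hsupp a b h₁ x hx₁) (hmid c d h₂ e' he' x hxe')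
  · exact absurd (hsupp c d h₂ x hx₂) (hmid a b h₁ e he x hxe)
  -- both paths would run through the edge `e`, whose ends are then branch vertices of both
  obtain rfl := hm.injOn e ((p a b h₁).edges_subset_edgeSet he) e'
    ((p c d h₂).edges_subset_edgeSet he') x hxe hxe'
  induction e using Sym2.ind with | _ y z =>
  have hmem : ∀ w ∈ s(y, z), w ∈ s(f a, f b) ∧ w ∈ s(f c, f d) := by
    intro w hw
    have hw₁ := Walk.mem_support_of_mem_edges he hw
    have hw₂ := Walk.mem_support_of_mem_edges he' hw
    have hwf := hdisj a b c d h₁ h₂ hne w hw₁ hw₂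
    exact ⟨Sym2.mem_iff.2 (hint a b h₁ w hw₁ hwf), Sym2.mem_iff.2 (hint c d h₂ w hw₂ hwf)⟩
  have hyz : y ≠ z := ((p a b h₁).edges_subset_edgeSet he).ne
  refine absurd (Sym2.map.injective hf ?_) hne
  simpa using Sym2.eq_of_ne_mem hyz (hmem y (by simp)).1 (hmem z (by simp)).1
    (hmem y (by simp)).2 (hmem z (by simp)).2

theorem of_sup_edge_deleteIncidenceSet (hK : K.support = Set.univ) {v x y : V} (hvx : H.Adj v x)
    (hvy : H.Adj v y) (h : ContainsSubdivision K (H.deleteIncidenceSet v ⊔ edge x y)) :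
    ContainsSubdivision K H := by
  classical
  refine of_isSubdivisionMap (mid := fun e ↦ if e = s(x, y) then some v else none)
    ⟨fun a b hab ↦ ?_, fun e _ t ht ↦ ?_, fun e _ e' _ t ht ht' ↦ ?_⟩ hK h
  · by_cases he : s(a, b) = s(x, y)
    · rcases Sym2.eq_iff.1 he with ⟨rfl, rfl⟩ | ⟨rfl, rfl⟩
      · simpa [he] using ⟨hvx.symm, hvy⟩
      · simpa [he] using ⟨hvy.symm, hvx⟩
    · simp only [he, if_false, Option.elim]
      rcases hab with hab | hab
      · exact (deleteIncidenceSet_adj.1 hab).1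
      · exact absurd ((adj_edge _ _).1 hab).1.symm he
  · split_ifs at ht
    cases ht
    rintro ⟨w, hw | hw⟩
    · exact (deleteIncidenceSet_adj.1 hw).2.1 rfl
    · rcases (edge_adj _ _ _ _).1 hw with ⟨⟨rfl, -⟩ | ⟨rfl, -⟩, -⟩
      exacts [hvx.ne rfl, hvy.ne rfl]
  · split_ifs at ht ht' with he he'
    exact he.trans he'.symm

end ContainsSubdivision

namespace SimpleGraph

variable (H : SimpleGraph V)

theorem support_sup_edge_deleteIncidenceSet_subset {v x y : V} (hvx : H.Adj v x)
    (hvy : H.Adj v y) : (H.deleteIncidenceSet v ⊔ edge x y).support ⊆ H.support \ {v} := by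
  rintro a ⟨b, hb | hb⟩
  · exact H.support_deleteIncidenceSet_subset v ⟨b, hb⟩
  · rcases (edge_adj _ _ _ _).1 hb with ⟨⟨rfl, -⟩ | ⟨rfl, -⟩, -⟩
    exacts [⟨⟨v, hvx.symm⟩, hvx.ne'⟩, ⟨⟨v, hvy.symm⟩, hvy.ne'⟩]

variable {H} in
theorem IsBridge.exists_split {u v : V} (huv : H.Adj u v) (hb : H.IsBridge s(u, v)) :
    ∃ H₁ H₂ : SimpleGraph V, H₁ ≤ H ∧ H₂ ≤ H ∧
      H.edgeSet = insert s(u, v) (H₁.edgeSet ∪ H₂.edgeSet) ∧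
      s(u, v) ∉ H₁.edgeSet ∪ H₂.edgeSet ∧ Disjoint H₁.edgeSet H₂.edgeSet ∧
      Disjoint (insert u H₁.support) (insert v H₂.support) := by
  set D := H.deleteEdges {s(u, v)}
  set A := {z | D.Reachable u z}
  have hclosed : ∀ a b, D.Adj a b → (a ∈ A ↔ b ∈ A) := fun a b hab ↦
    ⟨fun ha ↦ ha.trans hab.reachable, fun hb ↦ hb.trans hab.symm.reachable⟩
  have hD : D ≤ H := H.deleteEdges_le _
  refine ⟨D.between A A, D.between Aᶜ Aᶜ, between_le.trans hD, between_le.trans hD, ?_, ?_, ?_, ?_⟩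
  · ext e
    induction e using Sym2.ind with | _ a b =>
    simp only [mem_edgeSet, Set.mem_insert_iff, Set.mem_union, between_adj, Set.mem_compl_iff,
      or_self]
    by_cases he : s(a, b) = s(u, v)
    · rcases Sym2.eq_iff.1 he with ⟨rfl, rfl⟩ | ⟨rfl, rfl⟩ <;> simp [huv, huv.symm]
    · have hDab : D.Adj a b ↔ H.Adj a b := by simp [D, he]
      have := hclosed a b
      rw [hDab] at this ⊢
      simp only [he, false_or]
      tauto
  · rintro (h | h) <;> simpa [D] using (between_le h : D.Adj u v)
  · refine Set.disjoint_left.2 fun e h₁ h₂ ↦ ?_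
    induction e using Sym2.ind with | _ a b =>
    simp only [mem_edgeSet, between_adj, or_self, Set.mem_compl_iff] at h₁ h₂
    exact h₂.2.1 h₁.2.1
  · have h₁ : insert u (D.between A A).support ⊆ A :=
      Set.insert_subset_iff.2 ⟨Reachable.refl u, fun a ⟨b, hab⟩ ↦ (between_adj.1 hab).2.elim
        And.left And.left⟩
    have h₂ : insert v (D.between Aᶜ Aᶜ).support ⊆ Aᶜ :=
      Set.insert_subset_iff.2 ⟨hb, fun a ⟨b, hab⟩ ↦ (between_adj.1 hab).2.elim
        And.left And.left⟩
    exact Set.disjoint_of_subset h₁ h₂ disjoint_compl_right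

variable [Finite V]

theorem ncard_edgeSet_deleteIncidenceSet_add (v : V) :
    (H.deleteIncidenceSet v).edgeSet.ncard + (H.neighborSet v).ncard = H.edgeSet.ncard := by
  classical
  rw [edgeSet_deleteIncidenceSet, ← Set.ncard_congr' (H.incidenceSetEquivNeighborSet v),
    Set.ncard_sdiff_add_ncard_of_subset (H.incidenceSet_subset v)]

theorem ncard_edgeSet_sup_edge {x y : V} (hxy : x ≠ y) (hn : ¬H.Adj x y) :
    (H ⊔ edge x y).edgeSet.ncard = H.edgeSet.ncard + 1 := by
  rw [edgeSet_sup, edgeSet_edge_of_ne hxy, Set.union_singleton,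
    Set.ncard_insert_of_notMem (by simpa using hn)]

theorem ncard_neighborSet_lt_ncard_support {v : V} (hv : v ∈ H.support) :
    (H.neighborSet v).ncard < H.support.ncard := by
  have hsub : insert v (H.neighborSet v) ⊆ H.support := by
    rintro w (rfl | hw)
    exacts [hv, ⟨v, hw.symm⟩]
  have := Set.ncard_le_ncard hsub
  rwa [Set.ncard_insert_of_notMem (by simp)] at this

theorem exists_ncard_neighborSet_le_three (hm : H.edgeSet.ncard < 2 * H.support.ncard) :
    ∃ v ∈ H.support, (H.neighborSet v).ncard ≤ 3 := by
  classical
  have := Fintype.ofFinite V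
  by_contra! hdeg
  have hdeg' (v : V) : (H.neighborSet v).ncard = H.degree v := by
    rw [Set.ncard_eq_toFinset_card', Set.toFinset_card, card_neighborSet_eq_degree]
  have : 4 * H.support.ncard ≤ 2 * H.edgeSet.ncard := by
    rw [Set.ncard_eq_toFinset_card', ← coe_edgeFinset, Set.ncard_coe_finset,
      ← sum_degrees_eq_twice_card_edges]
    calc 4 * H.support.toFinset.card = ∑ v ∈ H.support.toFinset, 4 := by simp [mul_comm]
      _ ≤ ∑ v ∈ H.support.toFinset, H.degree v :=
        Finset.sum_le_sum fun v hv ↦ hdeg' v ▸ hdeg v (by simpa using hv)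
      _ ≤ ∑ v, H.degree v := Finset.sum_le_sum_of_subset (Finset.subset_univ _)
  omega

end SimpleGraph

theorem containsSubdivision_K4_of_pairwise_adj_neighborSet {H : SimpleGraph V} {v : V}
    (hv : (H.neighborSet v).ncard = 3) (hcl : (H.neighborSet v).Pairwise H.Adj) :
    ContainsSubdivision K₄ H := by
  classical
  obtain ⟨x, y, z, hxy, hxz, hyz, hN⟩ := Set.ncard_eq_three.1 hv
  have hvN : v ∉ H.neighborSet v := by simp
  refine .of_isContained ((not_cliqueFree_iff_top_isContained 4).1 fun hfree ↦
    hfree {v, x, y, z} ((isNClique_iff _).2 ⟨?_, ?_⟩))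
  · have : (({v, x, y, z} : Finset V) : Set V) = insert v (H.neighborSet v) := by simp [hN]
    rw [this, isClique_insert]
    exact ⟨hcl, fun w hw _ ↦ hw⟩
  · rw [hN] at hvN
    simp only [Set.mem_insert_iff, Set.mem_singleton_iff, not_or] at hvN
    simp [Finset.card_insert_of_notMem, hvN, hxy, hxz, hyz]

theorem exists_smaller_of_ncard_neighborSet_le_three [Finite V] {H : SimpleGraph V}
    (hH : ¬ContainsSubdivision K₄ H) {v : V} (hv : v ∈ H.support)
    (hd : (H.neighborSet v).ncard ≤ 3) :
    ∃ H' : SimpleGraph V, ¬ContainsSubdivision K₄ H' ∧ H'.support ⊆ H.support \ {v} ∧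
      H'.edgeSet.ncard < H.edgeSet.ncard ∧
      H.edgeSet.ncard ≤ H'.edgeSet.ncard + min 2 (H.neighborSet v).ncard := by
  have hd₀ : 0 < (H.neighborSet v).ncard := (Set.ncard_pos).2 hv
  have hcard := H.ncard_edgeSet_deleteIncidenceSet_add v
  by_cases hd₂ : (H.neighborSet v).ncard ≤ 2
  · exact ⟨H.deleteIncidenceSet v, fun h ↦ hH (h.mono (H.deleteIncidenceSet_le v)),
      H.support_deleteIncidenceSet_subset v, by omega, by omega⟩
  by_cases hcl : (H.neighborSet v).Pairwise H.Adj
  · exact (hH (containsSubdivision_K4_of_pairwise_adj_neighborSet (by omega) hcl)).elim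
  obtain ⟨x, hx, y, hy, hxy, hnxy⟩ : ∃ x ∈ H.neighborSet v, ∃ y ∈ H.neighborSet v,
      x ≠ y ∧ ¬H.Adj x y := by simpa [Set.Pairwise] using hcl
  have := ncard_edgeSet_sup_edge (H.deleteIncidenceSet v) hxy
    fun h ↦ hnxy (deleteIncidenceSet_adj.1 h).1
  exact ⟨H.deleteIncidenceSet v ⊔ edge x y,
    fun h ↦ hH (.of_sup_edge_deleteIncidenceSet support_top_of_nontrivial hx hy h),
    H.support_sup_edge_deleteIncidenceSet_subset hx hy, by omega, by omega⟩

-- The truncated subtraction makes the bound hold for edgeless graphs too.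
theorem ncard_edgeSet_le_of_not_containsSubdivision_K4 [Finite V] {H : SimpleGraph V}
    (hH : ¬ContainsSubdivision K₄ H) : H.edgeSet.ncard ≤ 2 * H.support.ncard - 3 := by
  induction hm : H.edgeSet.ncard using Nat.strong_induction_on generalizing H with
  | _ m ih =>
  by_contra hlt
  obtain ⟨a, b, hab⟩ : ∃ a b, H.Adj a b := by
    obtain ⟨e, he⟩ := Set.nonempty_of_ncard_ne_zero (s := H.edgeSet) (by omega)
    induction e using Sym2.ind with | _ a b => exact ⟨a, b, he⟩
  have : 0 < (H.neighborSet a).ncard := (Set.ncard_pos).2 ⟨b, hab⟩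
  have := H.ncard_neighborSet_lt_ncard_support ⟨b, hab⟩
  by_cases hm₁ : 2 * H.support.ncard ≤ m + 1
  · have hcard : (H.deleteEdges {s(a, b)}).edgeSet.ncard = m - 1 := by
      rw [edgeSet_deleteEdges, Set.ncard_sdiff_singleton_of_mem (H.mem_edgeSet.2 hab), hm]
    have := ih _ (by omega) (fun h ↦ hH (h.mono (H.deleteEdges_le _))) hcard
    have := Set.ncard_le_ncard (support_mono (H.deleteEdges_le {s(a, b)}))
    omega
  obtain ⟨v, hv, hd⟩ := H.exists_ncard_neighborSet_le_three (by omega)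
  obtain ⟨H', hH', hsupp, hlt', hle⟩ := exists_smaller_of_ncard_neighborSet_le_three hH hv hd
  have := H.ncard_neighborSet_lt_ncard_support hv
  have := ih _ (hm ▸ hlt') hH' rfl
  have := Set.ncard_le_ncard hsupp
  rw [Set.ncard_sdiff_singleton_of_mem hv] at this
  omega

theorem finsum_edgeSet_le_of_isBridge [Finite V] {H : SimpleGraph V}
    (hH : ¬ContainsSubdivision K₄ H) {w : Sym2 V → ℕ} (hw : ∀ e ∈ H.edgeSet, w e ≤ 2)
    (hbr : ∀ e ∈ H.edgeSet, w e = 2 → H.IsBridge e) :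
    ∑ᶠ e ∈ H.edgeSet, w e ≤ 2 * H.support.ncard - 2 := by
  induction hm : H.edgeSet.ncard using Nat.strong_induction_on generalizing H with
  | _ m ih =>
  have ih' : ∀ H' ≤ H, H'.edgeSet.ncard < m → ∑ᶠ e ∈ H'.edgeSet, w e ≤ 2 * H'.support.ncard - 2 :=
    fun H' hle hlt ↦ ih _ hlt (fun h ↦ hH (h.mono hle)) (fun e he ↦ hw e (edgeSet_mono hle he))
      (fun e he h2 ↦ (hbr e (edgeSet_mono hle he) h2).anti hle) rfl
  by_cases h2 : ∃ e ∈ H.edgeSet, w e = 2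
  · obtain ⟨e, he, hwe⟩ := h2
    induction e using Sym2.ind with | _ u v =>
    obtain ⟨H₁, H₂, h₁, h₂, hE, huv, hdisj, hsupp⟩ :=
      IsBridge.exists_split (u := u) (v := v) he (hbr _ he hwe)
    have hlt : ∀ H' ≤ H, s(u, v) ∉ H'.edgeSet → H'.edgeSet.ncard < m := fun H' hle hH' ↦
      hm ▸ Set.ncard_lt_ncard ((Set.ssubset_iff_of_subset (edgeSet_mono hle)).2 ⟨_, he, hH'⟩)
    have b₁ := ih' H₁ h₁ (hlt H₁ h₁ fun h ↦ huv (.inl h))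
    have b₂ := ih' H₂ h₂ (hlt H₂ h₂ fun h ↦ huv (.inr h))
    rw [hE, finsum_mem_insert _ huv (Set.toFinite _), finsum_mem_union hdisj (Set.toFinite _)
      (Set.toFinite _)]
    have hcard := Set.ncard_union_eq hsupp
    have hu : u ∈ H.support := ⟨v, he⟩
    have hv : v ∈ H.support := ⟨u, H.adj_symm he⟩
    have := Set.ncard_le_ncard (Set.union_subset (Set.insert_subset hu (support_mono h₁))
      (Set.insert_subset hv (support_mono h₂)))
    have := Set.ncard_le_ncard (Set.subset_insert u H₁.support)
    have := Set.ncard_le_ncard (Set.subset_insert v H₂.support)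
    have := (Set.ncard_pos).2 (Set.insert_nonempty u H₁.support)
    have := (Set.ncard_pos).2 (Set.insert_nonempty v H₂.support)
    omega
  · push Not at h2
    have hsum : ∑ᶠ e ∈ H.edgeSet, w e ≤ H.edgeSet.ncard := by
      rw [finsum_mem_eq_finite_toFinset_sum _ (Set.toFinite _),
        Set.ncard_eq_toFinset_card _ (Set.toFinite _)]
      simpa using Finset.sum_le_card_nsmul _ w 1 fun e he ↦ by
        have := hw e (by simpa using he)
        have := h2 e (by simpa using he)
        omega
    have := ncard_edgeSet_le_of_not_containsSubdivision_K4 hH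
    omega

def IsNeighborPairing (G : SimpleGraph V) (S : Set V) (F : V → Sym2 V) : Prop :=
  ∀ t ∉ S, ¬(F t).IsDiag ∧ ∀ p ∈ F t, p ∈ S ∧ G.Adj t p

def pairGraph (S : Set V) (F : V → Sym2 V) : SimpleGraph V :=
  fromEdgeSet (F '' Sᶜ)

noncomputable def pairWeight (S : Set V) (F : V → Sym2 V) (e : Sym2 V) : ℕ :=
  (Sᶜ ∩ F ⁻¹' {e}).ncard

variable {G : SimpleGraph V} {S : Set V}

theorem TwoDom.nonempty [Nonempty V] (hS : TwoDom G S) : S.Nonempty := by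
  obtain ⟨v⟩ := ‹Nonempty V›
  by_contra h
  rw [Set.not_nonempty_iff_eq_empty] at h
  simpa [h] using hS v (by simp [h])

theorem TwoDom.exists_isNeighborPairing (hS : TwoDom G S) : ∃ F, IsNeighborPairing G S F := by
  have (t : V) : ∃ e : Sym2 V, t ∉ S → ¬e.IsDiag ∧ ∀ p ∈ e, p ∈ S ∧ G.Adj t p := by
    by_cases ht : t ∈ S
    · exact ⟨s(t, t), fun h ↦ (h ht).elim⟩
    obtain ⟨p, q, hp, hq, hpq⟩ :=
      (Set.one_lt_ncard_iff (Set.finite_of_ncard_ne_zero (by have := hS t ht; omega))).1 (hS t ht)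
    refine ⟨s(p, q), fun _ ↦ ⟨by simpa using hpq, ?_⟩⟩
    intro r hr
    rcases Sym2.mem_iff.1 hr with rfl | rfl
    exacts [hp, hq]
  choose F hF using this
  exact ⟨F, fun t ht ↦ hF t ht⟩

namespace IsNeighborPairing

variable {F : V → Sym2 V}

theorem edgeSet_pairGraph (hF : IsNeighborPairing G S F) : (pairGraph S F).edgeSet = F '' Sᶜ := by
  rw [pairGraph, edgeSet_fromEdgeSet, sdiff_eq_left, Set.disjoint_left]
  rintro _ ⟨t, ht, rfl⟩
  exact (hF t ht).1

theorem support_pairGraph_subset (hF : IsNeighborPairing G S F) : (pairGraph S F).support ⊆ S := by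
  rintro a ⟨b, hab⟩
  obtain ⟨t, ht, hFt⟩ := hF.edgeSet_pairGraph ▸ (mem_edgeSet _).2 hab
  exact ((hF t ht).2 a (hFt ▸ Sym2.mem_mk_left a b)).1

theorem finsum_pairWeight (hF : IsNeighborPairing G S F) [Finite V] :
    ∑ᶠ e ∈ (pairGraph S F).edgeSet, pairWeight S F e = Sᶜ.ncard := by
  rw [hF.edgeSet_pairGraph]
  unfold pairWeight
  rw [← (Set.toFinite _).ncard_biUnion (fun _ _ ↦ Set.toFinite _)
    ((Set.pairwiseDisjoint_fiber F _).mono fun _ ↦ Set.inter_subset_right)]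
  congr
  ext t
  simp only [Set.mem_iUnion, Set.mem_inter_iff, Set.mem_preimage, Set.mem_singleton_iff]
  exact ⟨fun ⟨_, _, ht, _⟩ ↦ ht, fun ht ↦ ⟨F t, ⟨t, ht, rfl⟩, ht, rfl⟩⟩

theorem adj_of_eq (hF : IsNeighborPairing G S F) {t a b : V} (ht : t ∉ S) (h : F t = s(a, b)) :
    G.Adj a t ∧ G.Adj t b :=
  ⟨((hF t ht).2 a (h ▸ Sym2.mem_mk_left a b)).2.symm, ((hF t ht).2 b (h ▸ Sym2.mem_mk_right a b)).2⟩

theorem exists_isSubdivisionMap (hF : IsNeighborPairing G S F) :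
    ∃ mid, IsSubdivisionMap G (pairGraph S F) mid ∧ ∀ e t, mid e = some t → t ∉ S ∧ F t = e := by
  have (e : Sym2 V) : ∃ o : Option V, (∀ t, o = some t → t ∉ S ∧ F t = e) ∧
      (e ∈ F '' Sᶜ → o.isSome) := by
    by_cases he : e ∈ F '' Sᶜ
    · obtain ⟨t, ht, rfl⟩ := he
      exact ⟨some t, by simpa using ht, by simp⟩
    · exact ⟨none, by simp, fun h ↦ (he h).elim⟩
  choose mid hmid hsome using this
  have hspec : ∀ e ∈ (pairGraph S F).edgeSet, ∃ t, mid e = some t := fun e he ↦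
    Option.isSome_iff_exists.1 (hsome e (hF.edgeSet_pairGraph ▸ he))
  refine ⟨mid, ⟨fun a b hab ↦ ?_, fun e _ t ht hts ↦ ?_, fun e _ e' _ t ht ht' ↦ ?_⟩, hmid⟩
  · obtain ⟨t, ht⟩ := hspec s(a, b) hab
    rw [ht]
    exact hF.adj_of_eq (hmid _ t ht).1 (hmid _ t ht).2
  · exact (hmid e t ht).1 (hF.support_pairGraph_subset hts)
  · rw [← (hmid e t ht).2, (hmid e' t ht').2]

theorem not_containsSubdivision_K4 (hF : IsNeighborPairing G S F) (hG : ¬ContainsSubdivision K₄ G) :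
    ¬ContainsSubdivision K₄ (pairGraph S F) := by
  obtain ⟨mid, hm, -⟩ := hF.exists_isSubdivisionMap
  exact fun h ↦ hG (.of_isSubdivisionMap hm support_top_of_nontrivial h)

theorem exists_isPath (hF : IsNeighborPairing G S F) {D : SimpleGraph V} (hD : D ≤ pairGraph S F)
    {a b : V} {q : D.Walk a b} (hq : q.IsPath) :
    ∃ P : G.Walk a b, P.IsPath ∧ ∀ x ∈ P.support, x ∈ q.support ∨ x ∉ S ∧ F x ∈ q.edges := by
  obtain ⟨mid, hm, hmid⟩ := hF.exists_isSubdivisionMap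
  refine ⟨(hm.mono hD).expandWalk q, (hm.mono hD).isPath_expandWalk hq, fun x hx ↦ ?_⟩
  rcases ((hm.mono hD).mem_support_expandWalk q).1 hx with hx | ⟨e, he, hxe⟩
  · exact .inl hx
  · exact .inr ⟨(hmid e x hxe).1, (hmid e x hxe).2 ▸ he⟩

theorem pairWeight_le_two (hF : IsNeighborPairing G S F) (hG : ¬ContainsSubdivision K₂₃ G)
    {e : Sym2 V} (he : e ∈ (pairGraph S F).edgeSet) : pairWeight S F e ≤ 2 := by
  by_contra! h
  obtain ⟨T, hT, hT₃⟩ := Set.exists_subset_card_eq (show 3 ≤ pairWeight S F e by omega)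
  obtain ⟨t₁, t₂, t₃, h₁₂, h₁₃, h₂₃, rfl⟩ := Set.ncard_eq_three.1 hT₃
  induction e using Sym2.ind with | _ a b =>
  have hadj : ∀ t ∈ ({t₁, t₂, t₃} : Set V), G.Adj a t ∧ G.Adj b t := fun t ht ↦ by
    obtain ⟨htS, hFt⟩ := hT ht
    exact ⟨(hF.adj_of_eq htS hFt).1, (hF.adj_of_eq htS hFt).2.symm⟩
  exact hG (containsSubdivision_K23_of_adj ((pairGraph S F).ne_of_adj he) h₁₂ h₁₃ h₂₃
    (hadj t₁ (by simp)).1 (hadj t₁ (by simp)).2 (hadj t₂ (by simp)).1 (hadj t₂ (by simp)).2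
    (hadj t₃ (by simp)).1 (hadj t₃ (by simp)).2)

theorem exists_adj_isPath_of_reachable (hF : IsNeighborPairing G S F) {u v : V} (huv : u ≠ v)
    (h : ((pairGraph S F).deleteEdges {s(u, v)}).Reachable u v) :
    ∃ m ∉ S, G.Adj u m ∧ ∃ P : G.Walk m v, P.IsPath ∧ u ∉ P.support ∧
      ∀ x ∈ P.support, x ∉ S → F x ≠ s(u, v) := by
  classical
  -- `m` subdivides the first edge `uz` of a `u`-`v` path avoiding `uv`; the rest is lifted to `G`
  obtain ⟨q, hq⟩ := h.some.toPath
  cases q with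
  | nil => exact absurd rfl huv
  | @cons _ z _ hz rest =>
  rw [Walk.cons_isPath_iff] at hq
  obtain ⟨huz, hne⟩ := deleteEdges_adj.1 hz
  obtain ⟨m, hm, hFm⟩ := hF.edgeSet_pairGraph ▸ (mem_edgeSet _).2 huz
  obtain ⟨hum, hmz⟩ := hF.adj_of_eq hm hFm
  obtain ⟨R, hR, hRsupp⟩ := hF.exists_isPath (deleteEdges_le _) hq.1
  have hS : ∀ x ∈ (Walk.cons hz rest).support, x ∈ S := fun x hx ↦
    hF.support_pairGraph_subset (support_mono (deleteEdges_le _)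
      (mem_support_of_mem_walk_support _ Walk.not_nil_cons hx))
  have hR' : ∀ x ∈ R.support, x ∉ S → F x ≠ s(u, v) ∧ F x ≠ s(u, z) := by
    intro x hxR hxS
    rcases hRsupp x hxR with hx | ⟨-, hFx⟩
    · exact (hxS (hS x (by simp [hx]))).elim
    refine ⟨fun h ↦ ?_, fun h ↦ hq.2 (rest.fst_mem_support_of_mem_edges (h ▸ hFx))⟩
    simpa [h] using rest.edges_subset_edgeSet hFx
  refine ⟨m, hm, hum, .cons hmz R, hR.cons fun h ↦ (hR' m h hm).2 hFm, ?_, fun x hx hxS ↦ ?_⟩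
  · simp only [Walk.support_cons, List.mem_cons, not_or]
    exact ⟨hum.ne, fun h ↦ (hRsupp u h).elim hq.2 fun h' ↦ h'.1 (hS u (by simp))⟩
  · rcases (by simpa using hx : x = m ∨ x ∈ R.support) with rfl | hx
    · exact fun h ↦ hne (by simp [← hFm, h])
    · exact (hR' x hx hxS).1

theorem isBridge_of_pairWeight_eq_two (hF : IsNeighborPairing G S F)
    (hG : ¬ContainsSubdivision K₂₃ G) {e : Sym2 V} (he : e ∈ (pairGraph S F).edgeSet)
    (h₂ : pairWeight S F e = 2) : (pairGraph S F).IsBridge e := by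
  induction e using Sym2.ind with | _ u v =>
  rw [isBridge_iff]
  intro hreach
  obtain ⟨m, hm, hum, P, hP, huP, hPF⟩ :=
    hF.exists_adj_isPath_of_reachable ((pairGraph S F).ne_of_adj he) hreach
  obtain ⟨t₁, t₂, h₁₂, hT⟩ := Set.ncard_eq_two.1 h₂
  have hT' : ∀ t ∈ ({t₁, t₂} : Set V), t ∉ S ∧ F t = s(u, v) := fun t ht ↦ by
    rw [← hT] at ht
    exact ht
  have hadj : ∀ t ∈ ({t₁, t₂} : Set V), G.Adj u t ∧ G.Adj v t := fun t ht ↦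
    ⟨(hF.adj_of_eq (hT' t ht).1 (hT' t ht).2).1, (hF.adj_of_eq (hT' t ht).1 (hT' t ht).2).2.symm⟩
  have hPt : ∀ t ∈ ({t₁, t₂} : Set V), t ∉ P.support := fun t ht htP ↦
    hPF t htP (hT' t ht).1 (hT' t ht).2
  have hvS : v ∈ S := hF.support_pairGraph_subset ⟨u, (pairGraph S F).adj_symm he⟩
  exact hG (containsSubdivision_K23_of_path h₁₂ (by rintro rfl; exact hm hvS) (hadj t₁ (by simp)).1
    (hadj t₁ (by simp)).2 (hadj t₂ (by simp)).1 (hadj t₂ (by simp)).2 hum P hP huP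
    (hPt t₁ (by simp)) (hPt t₂ (by simp)))

end IsNeighborPairing

/-- If `S` is a 2-dominating set of an outerplanar graph with `x = |S|` and
`y = |V \ S|`, then `y ≤ 2x - 2`. -/
theorem twoDom_complement_bound [Fintype V] (G : SimpleGraph V)
    (hG : Outerplanar G) (hn : 3 ≤ Fintype.card V)
    (S : Set V) (hS : TwoDom G S) :
    (Sᶜ : Set V).ncard + 2 ≤ 2 * S.ncard := by
  have : Nonempty V := Fintype.card_pos_iff.1 (by omega)
  obtain ⟨F, hF⟩ := hS.exists_isNeighborPairing
  have hbound := finsum_edgeSet_le_of_isBridge (hF.not_containsSubdivision_K4 hG.1)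
    (fun _ ↦ hF.pairWeight_le_two hG.2) (fun _ ↦ hF.isBridge_of_pairWeight_eq_two hG.2)
  rw [hF.finsum_pairWeight] at hbound
  have := Set.ncard_le_ncard hF.support_pairGraph_subset
  have := hS.nonempty.ncard_pos
  omega
end

section
/- A connected multigraph without cut-vertices (a block) on x' ≥ 2 vertices with y' ≥ x' + 1 edges contains two vertices joined by three internally disjoint paths; hence it contains a subdivision of K₂,₃ or three parallel edges between a pair of vertices. -/
variable {V : Type*}

/-- A finite loopless multigraph on `V`, given by edge multiplicities. -/
structure Multigraph (V : Type*) where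
  mult : Sym2 V → ℕ
  loopless : ∀ v : V, mult s(v, v) = 0

/-- Adjacency in a multigraph: at least one edge between the two vertices. -/
def MAdj (M : Multigraph V) (a b : V) : Prop := 0 < M.mult s(a, b)

/-- The sub-multigraph induced on the vertex set `B` is connected. -/
def MConnOn (M : Multigraph V) (B : Set V) : Prop :=
  B.Nonempty ∧ ∀ a ∈ B, ∀ b ∈ B,
    Relation.ReflTransGen (fun x y => x ∈ B ∧ y ∈ B ∧ MAdj M x y) a b

/-- The induced sub-multigraph on `B` has no cut-vertex. -/
def MNoCutVertex (M : Multigraph V) (B : Set V) : Prop :=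
  ∀ v ∈ B, (B \ {v}).Nonempty → MConnOn M (B \ {v})

/-- A block: a maximal connected induced sub-multigraph without cut-vertices. -/
def MIsBlock (M : Multigraph V) (B : Set V) : Prop :=
  MConnOn M B ∧ MNoCutVertex M B ∧
    ∀ B' : Set V, B ⊆ B' → MConnOn M B' → MNoCutVertex M B' → B' = B

open scoped Classical in
/-- The number of edges (with multiplicity) having both endpoints in `B`. -/
noncomputable def edgesOn [Fintype V] [DecidableEq V] (M : Multigraph V) (B : Set V) : ℕ :=
  ∑ e : Sym2 V, if ∀ v ∈ e, v ∈ B then M.mult e else 0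

/-- A path in a multigraph, recorded by its (duplicate-free) list of vertices from
`a` to `b`. -/
def MPath (M : Multigraph V) (a b : V) (l : List V) : Prop :=
  l.Chain' (MAdj M) ∧ l.Nodup ∧ l.head? = some a ∧ l.getLast? = some b

/-- The internal vertices of a path given as a vertex list. -/
def internals (l : List V) : List V := (l.drop 1).dropLast

/-- How many times the vertex list `l` traverses the edge between `x` and `y`. -/
def stepCount [DecidableEq V] (l : List V) (x y : V) : ℕ :=
  (l.zip l.tail).count (x, y) + (l.zip l.tail).count (y, x)

/-!
If some edge `ab` has multiplicity at least three, three parallel copies are the three paths.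
If some edge `ab` has multiplicity two, a third vertex exists by counting, and going from `a`
to it while avoiding `b` and then on to `b` while avoiding `a` gives a path from `a` to `b`
that does not use `ab`; it joins the two parallel copies. Otherwise the graph is simple with
more edges than vertices, so it has a cycle `C` and an edge off `C`. Since there is no
cut-vertex, that edge lies on an ear of `C`: a path between two distinct vertices `a`, `b` of
`C` meeting `C` only at its ends and using none of its edges. The two arcs of `C` from `a` to
`b` and the ear are the three paths.
-/

open SimpleGraph Finset

lemma mem_tail_of_mem_internals {l : List V} {x : V} (h : x ∈ internals l) : x ∈ l.tail := by
  rw [internals, List.drop_one] at h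
  exact List.dropLast_subset _ h

lemma internals_reverse (l : List V) : internals l.reverse = (internals l).reverse := by
  simp only [internals, List.drop_one, List.tail_reverse, List.dropLast_reverse,
    List.tail_dropLast]

namespace SimpleGraph

variable {G : SimpleGraph V}

lemma Walk.IsPath.ne_start_of_mem_internals {u v x : V} {p : G.Walk u v} (hp : p.IsPath)
    (hx : x ∈ internals p.support) : x ≠ u := by
  have hnd := hp.support_nodup
  rw [← p.cons_tail_support, List.nodup_cons] at hnd
  rintro rfl
  exact hnd.1 (mem_tail_of_mem_internals hx)

lemma Walk.IsPath.ne_end_of_mem_internals {u v x : V} {p : G.Walk u v} (hp : p.IsPath)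
    (hx : x ∈ internals p.support) : x ≠ v := by
  refine hp.reverse.ne_start_of_mem_internals ?_
  rwa [support_reverse, internals_reverse, List.mem_reverse]

lemma Walk.disjoint_internals_support {u v : V} {p q : G.Walk u v} (hp : p.IsPath)
    (h : ∀ x ∈ p.support, x ∈ q.support → x = u ∨ x = v) :
    (internals p.support).Disjoint (internals q.support) := fun x hxp hxq =>
  (h x (List.mem_of_mem_tail (mem_tail_of_mem_internals hxp))
    (List.mem_of_mem_tail (mem_tail_of_mem_internals hxq))).elim
    (hp.ne_start_of_mem_internals hxp) (hp.ne_end_of_mem_internals hxp)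

lemma Walk.stepCount_support [DecidableEq V] {u v : V} (p : G.Walk u v) (x y : V) :
    stepCount p.support x y = p.edges.count s(x, y) := by
  induction p with
  | nil => simp [stepCount]
  | @cons a b c hab p ih =>
    rw [edges_cons, List.count_cons, ← ih, stepCount, stepCount, support_cons, List.tail_cons,
      ← p.cons_tail_support]
    simp only [List.zip_cons_cons, List.count_cons, beq_iff_eq, Sym2.eq_iff]
    -- as `a ≠ b`, the step `(a, b)` equals at most one of `(x, y)` and `(y, x)`
    have := hab.ne
    grind

def NoCutVertex (G : SimpleGraph V) : Prop :=
  ∀ ⦃a u v : V⦄, u ≠ a → v ≠ a → ∃ w : G.Walk u v, a ∉ w.support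

lemma NoCutVertex.exists_isPath_notMem_edges [DecidableEq V] (hG : G.NoCutVertex)
    {a b c : V} (hab : a ≠ b) (hca : c ≠ a) (hcb : c ≠ b) :
    ∃ p : G.Walk a b, p.IsPath ∧ s(a, b) ∉ p.edges := by
  obtain ⟨w₁, hw₁⟩ := hG hab hcb
  obtain ⟨w₂, hw₂⟩ := hG hca hab.symm
  refine ⟨(w₁.append w₂).bypass, Walk.bypass_isPath _, fun h => ?_⟩
  have h' := Walk.edges_bypass_subset_edges _ h
  rw [Walk.edges_append, List.mem_append] at h'
  rcases h' with h' | h'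
  · exact hw₁ (w₁.snd_mem_support_of_mem_edges h')
  · exact hw₂ (w₂.fst_mem_support_of_mem_edges h')

namespace Walk

lemma exists_walk_to_first_mem {S : Set V} {u v : V} (w : G.Walk u v) (hv : v ∈ S) :
    ∃ q ∈ S, q ∈ w.support ∧ ∃ w' : G.Walk u q, ∀ x ∈ w'.support, x ∈ S → x = q := by
  induction w with
  | nil => exact ⟨_, hv, by simp, .nil, by simp⟩
  | @cons u _ _ h p ih =>
    by_cases hu : u ∈ S
    · exact ⟨u, hu, by simp, .nil, by simp⟩
    obtain ⟨q, hq, hqp, w', hw'⟩ := ih hv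
    refine ⟨q, hq, by simp [hqp], .cons h w', fun x hx hxS => ?_⟩
    rcases List.mem_cons.mp hx with rfl | hx
    · exact absurd hxS hu
    · exact hw' x hx hxS

lemma notMem_edges_of_meets_only_at_end {c u q : V} {C : G.Walk c c} {w : G.Walk u q}
    (hw : ∀ x ∈ w.support, x ∈ C.support → x = q) {e : Sym2 V} (he : e ∈ w.edges) :
    e ∉ C.edges := by
  induction e using Sym2.ind with
  | _ x y =>
  intro heC
  have hx := hw x (w.fst_mem_support_of_mem_edges he) (C.fst_mem_support_of_mem_edges heC)
  have hy := hw y (w.snd_mem_support_of_mem_edges he) (C.snd_mem_support_of_mem_edges heC)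
  exact (w.adj_of_mem_edges he).ne (hx.trans hy.symm)

structure IsEar {a b c : V} (p : G.Walk a b) (C : G.Walk c c) : Prop where
  isPath : p.IsPath
  ne : a ≠ b
  start_mem : a ∈ C.support
  end_mem : b ∈ C.support
  meets_only_at_ends : ∀ x ∈ p.support, x ∈ C.support → x = a ∨ x = b
  edges_notMem : ∀ e ∈ p.edges, e ∉ C.edges

lemma IsCycle.exists_mem_support_ne {c : V} {C : G.Walk c c} (hC : C.IsCycle) (a : V) :
    ∃ s ∈ C.support, s ≠ a := by
  by_cases hc : c = a
  · subst hc
    exact ⟨C.snd, C.getVert_mem_support 1, (C.adj_snd hC.not_nil).ne.symm⟩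
  · exact ⟨c, C.start_mem_support, hc⟩

lemma IsCycle.exists_isPath_pair [DecidableEq V] {a b c : V} {C : G.Walk c c}
    (hC : C.IsCycle) (ha : a ∈ C.support) (hb : b ∈ C.support) (hab : a ≠ b) :
    ∃ q₁ q₂ : G.Walk a b, q₁.IsPath ∧ q₂.IsPath ∧
      (∀ x ∈ q₁.support, x ∈ q₂.support → x = a ∨ x = b) ∧ q₁.edges.Disjoint q₂.edges ∧
      q₁.support ⊆ C.support ∧ q₂.support ⊆ C.support ∧
      q₁.edges ⊆ C.edges ∧ q₂.edges ⊆ C.edges := by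
  set C' := C.rotate a ha
  have hC' : C'.IsCycle := hC.rotate ha
  have hb' : b ∈ C'.support := (C.mem_support_rotate_iff a ha).mpr hb
  set q := C'.takeUntil b hb'
  set r := C'.dropUntil b hb'
  have hspec : q.append r = C' := C'.take_spec hb'
  have hr : r.IsPath := IsCycle.isPath_of_append_right (not_nil_of_ne hab) (hspec ▸ hC')
  have hsupp : C'.support ⊆ C.support := fun x => (C.mem_support_rotate_iff a ha).mp
  have hedges : C'.edges ⊆ C.edges := fun e => (C.rotate_edges a ha).perm.mem_iff.mp
  refine ⟨q, r.reverse, hC'.isPath_takeUntil hb', hr.reverse, fun x hxq hxr => ?_, ?_,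
    fun x hx => hsupp (C'.support_takeUntil_subset_support hb' hx), ?_,
    fun e he => hedges (C'.edges_takeUntil_subset_edges hb' he), ?_⟩
  · have htails := hC'.support_nodup
    rw [← hspec, tail_support_append, List.nodup_append'] at htails
    rw [support_reverse, List.mem_reverse] at hxr
    rcases q.mem_support_iff.mp hxq with h | hq
    · exact .inl h
    rcases r.mem_support_iff.mp hxr with h | hr
    · exact .inr h
    · exact absurd hr (htails.2.2 hq)
  · rw [edges_reverse]
    exact fun e he he' => hC'.isTrail.disjoint_edges_takeUntil_dropUntil hb' he
      (List.mem_reverse.mp he')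
  · rw [support_reverse]
    exact fun x hx => hsupp (C'.support_dropUntil_subset_support hb' (List.mem_reverse.mp hx))
  · rw [edges_reverse]
    exact fun e he => hedges (C'.edges_dropUntil_subset_edges hb' (List.mem_reverse.mp he))

end Walk

lemma Connected.exists_isEar_of_notMem_support [DecidableEq V] (hconn : G.Connected)
    (hcut : G.NoCutVertex) {c u : V} {C : G.Walk c c} (hC : C.IsCycle) (hu : u ∉ C.support) :
    ∃ a b, ∃ p : G.Walk a b, p.IsEar C := by
  -- The ear runs from the first vertex `a` of `C` on a walk from `u`, back to `u`, and on to
  -- the first vertex `b` of `C` on a walk from `u` that avoids `a`.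
  obtain ⟨w₀⟩ := hconn u c
  obtain ⟨a, ha, -, w₁, hw₁⟩ :=
    w₀.exists_walk_to_first_mem (S := {x | x ∈ C.support}) C.start_mem_support
  obtain ⟨s, hs, hsa⟩ := hC.exists_mem_support_ne a
  have hua : u ≠ a := by rintro rfl; exact hu ha
  obtain ⟨w, hw⟩ := hcut hua hsa
  obtain ⟨b, hb, hbw, w₂, hw₂⟩ := w.exists_walk_to_first_mem (S := {x | x ∈ C.support}) hs
  refine ⟨a, b, (w₁.reverse.append w₂).bypass, ⟨Walk.bypass_isPath _, fun h => hw (h ▸ hbw),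
    ha, hb, fun x hx hxC => ?_, fun e he => ?_⟩⟩
  · have hx' := Walk.support_bypass_subset_support _ hx
    rw [Walk.mem_support_append_iff, Walk.support_reverse, List.mem_reverse] at hx'
    exact hx'.imp (hw₁ x · hxC) (hw₂ x · hxC)
  · have he' := Walk.edges_bypass_subset_edges _ he
    rw [Walk.edges_append, Walk.edges_reverse, List.mem_append, List.mem_reverse] at he'
    rcases he' with he' | he'
    · exact Walk.notMem_edges_of_meets_only_at_end hw₁ he'
    · exact Walk.notMem_edges_of_meets_only_at_end hw₂ he'

lemma Connected.exists_isEar [DecidableEq V] (hconn : G.Connected) (hcut : G.NoCutVertex)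
    {c x y : V} {C : G.Walk c c} (hC : C.IsCycle) (hxy : G.Adj x y) (he : s(x, y) ∉ C.edges) :
    ∃ a b, ∃ p : G.Walk a b, p.IsEar C := by
  by_cases hx : x ∈ C.support
  · by_cases hy : y ∈ C.support
    · exact ⟨x, y, .cons hxy .nil, ⟨by simp [hxy.ne], hxy.ne, hx, hy, by simp, by simpa⟩⟩
    · exact hconn.exists_isEar_of_notMem_support hcut hC hy
  · exact hconn.exists_isEar_of_notMem_support hcut hC hx

lemma Connected.exists_isCycle_adj_notMem_edges [Fintype V] [DecidableEq V]
    [DecidableRel G.Adj] (hconn : G.Connected) (hcard : Fintype.card V < #G.edgeFinset) :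
    ∃ c, ∃ C : G.Walk c c, C.IsCycle ∧ ∃ x y, G.Adj x y ∧ s(x, y) ∉ C.edges := by
  have hcyclic : ¬G.IsAcyclic := fun h => by
    have := (IsTree.mk hconn h).card_edgeFinset
    omega
  obtain ⟨c, C, hC⟩ : ∃ c, ∃ C : G.Walk c c, C.IsCycle := by
    simpa [IsAcyclic] using hcyclic
  have hlen : C.edges.toFinset.card < #G.edgeFinset := calc
    C.edges.toFinset.card ≤ C.support.tail.length := by
      simpa using List.toFinset_card_le C.edges
    _ ≤ Fintype.card V := hC.support_nodup.length_le_card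
    _ < #G.edgeFinset := hcard
  obtain ⟨e, heG, heC⟩ := Finset.exists_mem_notMem_of_card_lt_card hlen
  induction e using Sym2.ind with
  | _ x y => exact ⟨c, C, hC, x, y, by simpa using heG, by simpa using heC⟩

end SimpleGraph

namespace Multigraph

def toSimpleGraph (M : Multigraph V) : SimpleGraph V where
  Adj := MAdj M
  symm := ⟨fun a b h => by rwa [MAdj, Sym2.eq_swap]⟩
  loopless := ⟨fun a h => by simp [MAdj, M.loopless] at h⟩

instance (M : Multigraph V) : DecidableRel M.toSimpleGraph.Adj :=
  fun a b => inferInstanceAs (Decidable (0 < M.mult s(a, b)))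

lemma mem_edgeSet_toSimpleGraph {M : Multigraph V} {e : Sym2 V} :
    e ∈ M.toSimpleGraph.edgeSet ↔ 0 < M.mult e := by
  induction e using Sym2.ind with
  | _ x y => exact SimpleGraph.mem_edgeSet _

def HasThreePaths [DecidableEq V] (M : Multigraph V) (a b : V) : Prop :=
  ∃ l₁ l₂ l₃ : List V,
    MPath M a b l₁ ∧ MPath M a b l₂ ∧ MPath M a b l₃ ∧
    (internals l₁).Disjoint (internals l₂) ∧
    (internals l₁).Disjoint (internals l₃) ∧
    (internals l₂).Disjoint (internals l₃) ∧
    ∀ x y : V, stepCount l₁ x y + stepCount l₂ x y + stepCount l₃ x y ≤ M.mult s(x, y)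

variable {M : Multigraph V}

lemma exists_walk_of_reflTransGen {B : Set V} {u v : V} (hu : u ∈ B)
    (h : Relation.ReflTransGen (fun x y => x ∈ B ∧ y ∈ B ∧ MAdj M x y) u v) :
    ∃ w : M.toSimpleGraph.Walk u v, ∀ x ∈ w.support, x ∈ B := by
  induction h with
  | refl => exact ⟨.nil, by simpa using hu⟩
  | tail _ hvw ih =>
    obtain ⟨w, hw⟩ := ih
    refine ⟨w.concat (show M.toSimpleGraph.Adj _ _ from hvw.2.2), fun x hx => ?_⟩
    rw [Walk.support_concat, List.mem_append, List.mem_singleton] at hx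
    rcases hx with hx | rfl
    · exact hw x hx
    · exact hvw.2.1

lemma connected_toSimpleGraph (h : MConnOn M Set.univ) : M.toSimpleGraph.Connected := by
  obtain ⟨⟨v, -⟩, h⟩ := h
  refine (connected_iff_exists_forall_reachable _).mpr ⟨v, fun w => ?_⟩
  obtain ⟨p, -⟩ := exists_walk_of_reflTransGen (Set.mem_univ v) (h v trivial w trivial)
  exact ⟨p⟩

lemma noCutVertex_toSimpleGraph (h : MNoCutVertex M Set.univ) :
    M.toSimpleGraph.NoCutVertex := by
  intro a u v hu hv
  have hu' : u ∈ Set.univ \ {a} := by simpa using hu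
  obtain ⟨w, hw⟩ := exists_walk_of_reflTransGen hu'
    ((h a trivial ⟨u, hu'⟩).2 u hu' v (by simpa using hv))
  exact ⟨w, fun ha => (hw a ha).2 rfl⟩

variable {a b : V}

lemma mPath_support {p : M.toSimpleGraph.Walk a b} (hp : p.IsPath) : MPath M a b p.support :=
  ⟨p.isChain_adj_support, hp.support_nodup, by rw [← p.cons_tail_support]; rfl,
    by rw [List.getLast?_eq_some_getLast p.support_ne_nil, p.getLast_support]⟩

lemma mult_pos_of_mem_edges {p : M.toSimpleGraph.Walk a b} {e : Sym2 V} (he : e ∈ p.edges) :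
    0 < M.mult e :=
  mem_edgeSet_toSimpleGraph.mp (p.edges_subset_edgeSet he)

variable [DecidableEq V]

lemma count_edges_eq_zero_of_mult_eq_zero (p : M.toSimpleGraph.Walk a b)
    {e : Sym2 V} (he : M.mult e = 0) : p.edges.count e = 0 :=
  List.count_eq_zero.mpr fun h => (mult_pos_of_mem_edges h).ne' he

lemma hasThreePaths_of_isPath {p₁ p₂ p₃ : M.toSimpleGraph.Walk a b}
    (h₁ : p₁.IsPath) (h₂ : p₂.IsPath) (h₃ : p₃.IsPath)
    (h₁₂ : ∀ x ∈ p₁.support, x ∈ p₂.support → x = a ∨ x = b)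
    (h₁₃ : ∀ x ∈ p₁.support, x ∈ p₃.support → x = a ∨ x = b)
    (h₂₃ : ∀ x ∈ p₂.support, x ∈ p₃.support → x = a ∨ x = b)
    (hmult : ∀ e, p₁.edges.count e + p₂.edges.count e + p₃.edges.count e ≤ M.mult e) :
    M.HasThreePaths a b := by
  refine ⟨p₁.support, p₂.support, p₃.support, mPath_support h₁, mPath_support h₂,
    mPath_support h₃, Walk.disjoint_internals_support h₁ h₁₂,
    Walk.disjoint_internals_support h₁ h₁₃, Walk.disjoint_internals_support h₂ h₂₃,
    fun x y => ?_⟩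
  simp only [Walk.stepCount_support]
  exact hmult _

lemma hasThreePaths_of_count_add_two_le_mult {q : M.toSimpleGraph.Walk a b} (hq : q.IsPath)
    (hab : q.edges.count s(a, b) + 2 ≤ M.mult s(a, b)) : M.HasThreePaths a b := by
  have hadj : M.toSimpleGraph.Adj a b := show 0 < M.mult s(a, b) by omega
  let p : M.toSimpleGraph.Walk a b := .cons hadj .nil
  have hp : p.IsPath := by simp [p, hadj.ne]
  have hpq : ∀ x ∈ p.support, x ∈ q.support → x = a ∨ x = b := by simp [p]
  refine hasThreePaths_of_isPath hp hp hq (by simp [p]) hpq hpq fun e => ?_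
  simp only [p, Walk.edges_cons, Walk.edges_nil, List.count_singleton, beq_iff_eq]
  split_ifs with h
  · subst h
    omega
  · have := List.nodup_iff_count_le_one.mp (q.edges_nodup_of_support_nodup hq.support_nodup) e
    rcases (M.mult e).eq_zero_or_pos with h0 | h0
    · rw [count_edges_eq_zero_of_mult_eq_zero q h0, h0]
    · omega

lemma exists_hasThreePaths_of_three_le_mult {e : Sym2 V} (he : 3 ≤ M.mult e) :
    ∃ a b, a ≠ b ∧ M.HasThreePaths a b := by
  induction e using Sym2.ind with
  | _ a b =>
  have hab : M.toSimpleGraph.Adj a b := show 0 < M.mult s(a, b) by omega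
  refine ⟨a, b, hab.ne, hasThreePaths_of_count_add_two_le_mult (q := .cons hab .nil)
    (by simp [hab.ne]) ?_⟩
  simpa using he

lemma exists_hasThreePaths_of_two_le_mult (hG : M.toSimpleGraph.NoCutVertex) {e : Sym2 V}
    (he : 2 ≤ M.mult e) {c : V} (hc : c ∉ e) : ∃ a b, a ≠ b ∧ M.HasThreePaths a b := by
  induction e using Sym2.ind with
  | _ a b =>
  obtain ⟨hca, hcb⟩ : c ≠ a ∧ c ≠ b := by simpa [not_or] using hc
  have hab : a ≠ b := by rintro rfl; simp [M.loopless] at he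
  obtain ⟨q, hq, hqab⟩ := hG.exists_isPath_notMem_edges hab hca hcb
  exact ⟨a, b, hab, hasThreePaths_of_count_add_two_le_mult hq
    (by rwa [List.count_eq_zero.mpr hqab])⟩

lemma hasThreePaths_of_isEar {c : V} {C : M.toSimpleGraph.Walk c c} (hC : C.IsCycle)
    {p : M.toSimpleGraph.Walk a b} (hp : p.IsEar C) : M.HasThreePaths a b := by
  obtain ⟨q₁, q₂, hq₁, hq₂, h₁₂, hE₁₂, hS₁, hS₂, hE₁, hE₂⟩ :=
    hC.exists_isPath_pair hp.start_mem hp.end_mem hp.ne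
  refine hasThreePaths_of_isPath hq₁ hq₂ hp.isPath h₁₂
    (fun x hx hxp => hp.meets_only_at_ends x hxp (hS₁ hx))
    (fun x hx hxp => hp.meets_only_at_ends x hxp (hS₂ hx)) fun e => ?_
  have hnd : (q₁.edges ++ q₂.edges ++ p.edges).Nodup := by
    refine List.nodup_append'.mpr ⟨List.nodup_append'.mpr ⟨hq₁.isTrail.edges_nodup,
      hq₂.isTrail.edges_nodup, hE₁₂⟩, hp.isPath.isTrail.edges_nodup, fun e he hep => ?_⟩
    rcases List.mem_append.mp he with he | he
    · exact hp.edges_notMem e hep (hE₁ he)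
    · exact hp.edges_notMem e hep (hE₂ he)
  have hle := List.nodup_iff_count_le_one.mp hnd e
  rw [List.count_append, List.count_append] at hle
  rcases (M.mult e).eq_zero_or_pos with h0 | h0
  · simp only [count_edges_eq_zero_of_mult_eq_zero _ h0, h0, le_refl]
  · omega

variable [Fintype V]

lemma edgesOn_univ_le_mul {m : ℕ} (hm : ∀ e, M.mult e ≤ m) :
    edgesOn M Set.univ ≤ m * #M.toSimpleGraph.edgeFinset := calc
  edgesOn M Set.univ = ∑ e ∈ M.toSimpleGraph.edgeFinset, M.mult e := by
    simp only [edgesOn, Set.mem_univ, implies_true, if_true]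
    refine (Finset.sum_subset (subset_univ _) fun e _ he => ?_).symm
    simpa [mem_edgeSet_toSimpleGraph] using he
  _ ≤ ∑ _ ∈ M.toSimpleGraph.edgeFinset, m := sum_le_sum fun e _ => hm e
  _ = m * #M.toSimpleGraph.edgeFinset := by rw [sum_const, smul_eq_mul, mul_comm]

lemma exists_notMem_of_mult_le_two (hm : ∀ e, M.mult e ≤ 2)
    (hy : Fintype.card V + 1 ≤ edgesOn M Set.univ) (e : Sym2 V) : ∃ c, c ∉ e := by
  have hcard : 3 ≤ Fintype.card V := by
    have hedges := edgesOn_univ_le_mul hm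
    have hchoose := M.toSimpleGraph.card_edgeFinset_le_card_choose_two
    by_contra! h
    rw [Nat.choose_two_right] at hchoose
    interval_cases Fintype.card V <;> omega
  induction e using Sym2.ind with
  | _ a b =>
  have hab : #({a, b} : Finset V) < #(univ : Finset V) :=
    (card_le_two).trans_lt (by rwa [card_univ])
  obtain ⟨c, -, hc⟩ := exists_mem_notMem_of_card_lt_card hab
  exact ⟨c, by simpa using hc⟩

end Multigraph

theorem block_dense_three_paths_general [Fintype V] [DecidableEq V]
    (M : Multigraph V) (hconn : MConnOn M Set.univ)
    (hblock : MNoCutVertex M Set.univ)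
    (hy : Fintype.card V + 1 ≤ edgesOn M Set.univ) :
    ∃ (a b : V), a ≠ b ∧ ∃ l₁ l₂ l₃ : List V,
      MPath M a b l₁ ∧ MPath M a b l₂ ∧ MPath M a b l₃ ∧
      (internals l₁).Disjoint (internals l₂) ∧
      (internals l₁).Disjoint (internals l₃) ∧
      (internals l₂).Disjoint (internals l₃) ∧
      ∀ x y : V, stepCount l₁ x y + stepCount l₂ x y + stepCount l₃ x y ≤
        M.mult s(x, y) := by
  suffices ∃ a b, a ≠ b ∧ M.HasThreePaths a b from this
  have hG := Multigraph.connected_toSimpleGraph hconn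
  have hcut := Multigraph.noCutVertex_toSimpleGraph hblock
  by_cases h3 : ∃ e, 3 ≤ M.mult e
  · obtain ⟨e, he⟩ := h3
    exact Multigraph.exists_hasThreePaths_of_three_le_mult he
  simp only [not_exists, not_le] at h3
  by_cases h2 : ∃ e, 2 ≤ M.mult e
  · obtain ⟨e, he⟩ := h2
    obtain ⟨c, hc⟩ :=
      Multigraph.exists_notMem_of_mult_le_two (fun e => Nat.le_of_lt_succ (h3 e)) hy e
    exact Multigraph.exists_hasThreePaths_of_two_le_mult hcut he hc
  simp only [not_exists, not_le] at h2
  have hedges := Multigraph.edgesOn_univ_le_mul (fun e => Nat.le_of_lt_succ (h2 e))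
  obtain ⟨c, C, hC, x, y, hxy, he⟩ := hG.exists_isCycle_adj_notMem_edges (by omega)
  obtain ⟨a, b, p, hp⟩ := hG.exists_isEar hcut hC hxy he
  exact ⟨a, b, hp.ne, Multigraph.hasThreePaths_of_isEar hC hp⟩

/-- A connected multigraph without cut-vertices (a block) on `x' ≥ 2` vertices with
`y' ≥ x' + 1` edges contains two vertices joined by three internally disjoint paths
(using pairwise distinct edges, so that parallel edges may serve as distinct
length-one paths). -/
theorem block_dense_three_paths [Fintype V] [DecidableEq V]
    (M : Multigraph V) (hconn : MConnOn M Set.univ)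
    (hblock : MNoCutVertex M Set.univ)
    (hx : 2 ≤ Fintype.card V)
    (hy : Fintype.card V + 1 ≤ edgesOn M Set.univ) :
    ∃ (a b : V), a ≠ b ∧ ∃ l₁ l₂ l₃ : List V,
      MPath M a b l₁ ∧ MPath M a b l₂ ∧ MPath M a b l₃ ∧
      (internals l₁).Disjoint (internals l₂) ∧
      (internals l₁).Disjoint (internals l₃) ∧
      (internals l₂).Disjoint (internals l₃) ∧
      ∀ x y : V, stepCount l₁ x y + stepCount l₂ x y + stepCount l₃ x y ≤
        M.mult s(x, y) :=
  block_dense_three_paths_general M hconn hblock hy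
end

section
/- For each k ≥ 1, the graph H_k on vertices {a_i, b_i, c_i : 1 ≤ i ≤ k} with edges {a_i b_i, b_i c_i, c_i a_i : 1 ≤ i ≤ k} ∪ {c_i a_{i+1} : 1 ≤ i ≤ k−1} ∪ {a_1 a_i, a_1 c_i : 2 ≤ i ≤ k} has secure total domination number γ_st(H_k) = 2k. -/
open SimpleGraph

variable {V : Type*}

/-- The edges of the extremal graph `H_k`: vertex `(i, 0)` is `a_{i+1}`, `(i, 1)` is
`b_{i+1}`, and `(i, 2)` is `c_{i+1}` (0-indexed). -/
def HkRel (k : ℕ) (u v : Fin k × Fin 3) : Prop :=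
  (u.1 = v.1 ∧ ((u.2 = 0 ∧ v.2 = 1) ∨ (u.2 = 1 ∧ v.2 = 2) ∨ (u.2 = 2 ∧ v.2 = 0))) ∨
  ((v.1 : ℕ) = (u.1 : ℕ) + 1 ∧ u.2 = 2 ∧ v.2 = 0) ∨
  ((u.1 : ℕ) = 0 ∧ u.2 = 0 ∧ 1 ≤ (v.1 : ℕ) ∧ (v.2 = 0 ∨ v.2 = 2))

/-- The maximal outerplanar graph `H_k` on `n = 3k` vertices. -/
def Hk (k : ℕ) : SimpleGraph (Fin k × Fin 3) := SimpleGraph.fromRel (HkRel k)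

lemma adj_b {k : ℕ} (i : Fin k) (u : Fin k × Fin 3) :
    (Hk k).Adj (i, 1) u ↔ u = (i, 0) ∨ u = (i, 2) := by
  constructor
  · obtain ⟨j, y⟩ := u
    rintro ⟨hne, h | h⟩
    · rcases h with ⟨h1, (⟨h2, _⟩ | ⟨_, h2⟩ | ⟨h2, _⟩)⟩ | ⟨_, h2, _⟩ | ⟨_, h2, _⟩<;>
        simp_all [Prod.ext_iff]
    · rcases h with ⟨h1, (⟨h2, h3⟩ | ⟨h2, h3⟩ | ⟨h2, h3⟩)⟩ | ⟨_, _, h3⟩ | ⟨_, _, _, (h3 | h3)⟩<;>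
        simp_all [Prod.ext_iff]
  · rintro (rfl | rfl)
    · exact ⟨by simp [Prod.ext_iff], Or.inr (Or.inl ⟨rfl, Or.inl ⟨rfl, rfl⟩⟩)⟩
    · exact ⟨by simp [Prod.ext_iff], Or.inl (Or.inl ⟨rfl, Or.inr (Or.inl ⟨rfl, rfl⟩)⟩)⟩
lemma adj01 {k : ℕ} (j : Fin k) : (Hk k).Adj (j, 0) (j, 1) :=
  ⟨by simp [Prod.ext_iff], Or.inl (Or.inl ⟨rfl, Or.inl ⟨rfl, rfl⟩⟩)⟩

lemma adj12 {k : ℕ} (j : Fin k) : (Hk k).Adj (j, 1) (j, 2) :=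
  ⟨by simp [Prod.ext_iff], Or.inl (Or.inl ⟨rfl, Or.inr (Or.inl ⟨rfl, rfl⟩)⟩)⟩

lemma adj20 {k : ℕ} (j : Fin k) : (Hk k).Adj (j, 2) (j, 0) :=
  ⟨by simp [Prod.ext_iff], Or.inl (Or.inl ⟨rfl, Or.inr (Or.inr ⟨rfl, rfl⟩)⟩)⟩

lemma upper {k : ℕ} : STDS (Hk k) {v : Fin k × Fin 3 | v.2 ≠ 1} := by
  constructor
  · rintro ⟨j, y⟩
    fin_cases y
    · exact ⟨(j, 2), by simp, (adj20 j).symm⟩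
    · exact ⟨(j, 0), by simp, (adj01 j).symm⟩
    · exact ⟨(j, 0), by simp, adj20 j⟩
  · rintro ⟨j, y⟩ hu
    simp only [Set.mem_setOf_eq, not_not] at hu
    subst hu
    refine ⟨(j, 2), by simp, adj12 j, ?_⟩
    rintro ⟨l, y⟩
    by_cases hl : l = j
    · subst hl
      fin_cases y
      · refine ⟨(l, 1), Or.inr rfl, ?_⟩
        exact adj01 l
      · refine ⟨(l, 0), Or.inl ⟨by simp, by simp [Prod.ext_iff]⟩, ?_⟩
        exact (adj01 l).symm
      · refine ⟨(l, 0), Or.inl ⟨by simp, by simp [Prod.ext_iff]⟩, ?_⟩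
        exact adj20 l
    · fin_cases y
      · refine ⟨(l, 2), Or.inl ⟨by simp, by simp [Prod.ext_iff, hl]⟩, ?_⟩
        exact (adj20 l).symm
      · refine ⟨(l, 0), Or.inl ⟨by simp, by simp [Prod.ext_iff]⟩, ?_⟩
        exact (adj01 l).symm
      · refine ⟨(l, 0), Or.inl ⟨by simp, by simp [Prod.ext_iff]⟩, ?_⟩
        exact adj20 l

lemma upper_card {k : ℕ} : ({v : Fin k × Fin 3 | v.2 ≠ 1}).ncard = 2 * k := by
  have h : {v : Fin k × Fin 3 | v.2 ≠ 1} =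
      ↑((Finset.univ : Finset (Fin k)) ×ˢ ({0, 2} : Finset (Fin 3))) := by
    ext ⟨i, j⟩
    fin_cases j <;> simp
  rw [h, Set.ncard_coe_finset, Finset.card_product]
  simp [mul_comm]
lemma two_in_fiber {k : ℕ} {S : Set (Fin k × Fin 3)} (hS : STDS (Hk k) S) (i : Fin k) :
    ∃ x ∈ S, ∃ y ∈ S, x ≠ y ∧ x.1 = i ∧ y.1 = i := by
  obtain ⟨u, huS, hadj⟩ := hS.1 (i, 1)
  rcases (adj_b i u).1 hadj with rfl | rfl
  · by_cases h2 : (i, 2) ∈ S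
    · exact ⟨(i, 0), huS, (i, 2), h2, by simp [Prod.ext_iff], rfl, rfl⟩
    by_cases h1 : (i, 1) ∈ S
    · exact ⟨(i, 0), huS, (i, 1), h1, by simp [Prod.ext_iff], rfl, rfl⟩
    exfalso
    obtain ⟨v, hvS, hadjv, htd⟩ := hS.2 (i, 1) h1
    rcases (adj_b i v).1 hadjv with rfl | rfl
    · obtain ⟨w, hwS, hadjw⟩ := htd (i, 1)
      rcases (adj_b i w).1 hadjw with rfl | rfl
      · rcases hwS with ⟨_, hne⟩ | heq
        · exact hne rfl
        · exact absurd heq (by simp [Prod.ext_iff])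
      · rcases hwS with ⟨hmem, _⟩ | heq
        · exact h2 hmem
        · exact absurd heq (by simp [Prod.ext_iff])
    · exact h2 hvS
  · by_cases h0 : (i, 0) ∈ S
    · exact ⟨(i, 0), h0, (i, 2), huS, by simp [Prod.ext_iff], rfl, rfl⟩
    by_cases h1 : (i, 1) ∈ S
    · exact ⟨(i, 2), huS, (i, 1), h1, by simp [Prod.ext_iff], rfl, rfl⟩
    exfalso
    obtain ⟨v, hvS, hadjv, htd⟩ := hS.2 (i, 1) h1
    rcases (adj_b i v).1 hadjv with rfl | rfl
    · exact h0 hvS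
    · obtain ⟨w, hwS, hadjw⟩ := htd (i, 1)
      rcases (adj_b i w).1 hadjw with rfl | rfl
      · rcases hwS with ⟨hmem, _⟩ | heq
        · exact h0 hmem
        · exact absurd heq (by simp [Prod.ext_iff])
      · rcases hwS with ⟨_, hne⟩ | heq
        · exact hne rfl
        · exact absurd heq (by simp [Prod.ext_iff])

lemma lower {k : ℕ} {S : Set (Fin k × Fin 3)} (hS : STDS (Hk k) S) : 2 * k ≤ S.ncard := by
  classical
  rw [Set.ncard_eq_toFinset_card' S]
  rw [Finset.card_eq_sum_card_fiberwise (f := Prod.fst) (t := Finset.univ)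
    (fun x _ => Finset.mem_univ _)]
  have h2 : ∀ i : Fin k, 2 ≤ (S.toFinset.filter (fun v => v.1 = i)).card := by
    intro i
    obtain ⟨x, hx, y, hy, hxy, hxi, hyi⟩ := two_in_fiber hS i
    exact Nat.succ_le_of_lt (Finset.one_lt_card.2
      ⟨x, by simp [hx, hxi], y, by simp [hy, hyi], hxy⟩)
  calc 2 * k = ∑ _i : Fin k, 2 := by simp [mul_comm]
    _ ≤ _ := Finset.sum_le_sum fun i _ => h2 i
/-- For every `k ≥ 1`, the secure total domination number of `H_k` equals `2k`. -/
theorem gammaSt_Hk (k : ℕ) (hk : 1 ≤ k) : gammaSt (Hk k) = 2 * k := by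
  unfold gammaSt
  refine le_antisymm (Nat.sInf_le ⟨_, upper, upper_card⟩) ?_
  refine le_csInf ⟨2 * k, _, upper, upper_card⟩ ?_
  rintro n ⟨S, hS, rfl⟩
  exact lower hS
end

section
/- For each k ≥ 1, the set S = {a_1, c_1, a_2, c_2, …, a_k, c_k} is a secure total dominating set of the graph H_k, so γ_st(H_k) ≤ 2k. -/
open SimpleGraph

variable {V : Type*}

lemma Hk_adj01 (k : ℕ) (i : Fin k) : (Hk k).Adj (i, (0:Fin 3)) (i, 1) := by
  simp [Hk, HkRel]

lemma Hk_adj12 (k : ℕ) (i : Fin k) : (Hk k).Adj (i, (1:Fin 3)) (i, 2) := by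
  simp [Hk, HkRel]

lemma Hk_adj20 (k : ℕ) (i : Fin k) : (Hk k).Adj (i, (2:Fin 3)) (i, 0) := by
  simp [Hk, HkRel]

lemma Hk_card_aux (k : ℕ) : ({p : Fin k × Fin 3 | p.2 ≠ 1} : Set _).ncard = 2 * k := by
  have e : ({p : Fin k × Fin 3 | p.2 ≠ 1} : Set _) ≃ Fin k × {t : Fin 3 // t ≠ 1} :=
    { toFun := fun p => (p.1.1, ⟨p.1.2, p.2⟩)
      invFun := fun q => ⟨(q.1, q.2.1), q.2.2⟩
      left_inv := fun p => rfl
      right_inv := fun q => rfl }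
  rw [← Nat.card_coe_set_eq, Nat.card_congr e, Nat.card_prod,
    Nat.card_eq_fintype_card, Nat.card_eq_fintype_card]
  have : Fintype.card {t : Fin 3 // t ≠ 1} = 2 := by decide
  simp [this, Nat.mul_comm]

lemma Hk_stds (k : ℕ) : STDS (Hk k) {p : Fin k × Fin 3 | p.2 ≠ 1} := by
  constructor
  · rintro ⟨i, t⟩
    fin_cases t
    · exact ⟨(i, 2), by simp, (Hk_adj20 k i).symm⟩
    · exact ⟨(i, 0), by simp, (Hk_adj01 k i).symm⟩
    · exact ⟨(i, 0), by simp, Hk_adj20 k i⟩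
  · rintro ⟨i, t⟩ hu
    simp only [Set.mem_setOf_eq, not_not] at hu
    subst hu
    refine ⟨(i, 0), by simp, (Hk_adj01 k i).symm, ?_⟩
    rintro ⟨j, s⟩
    fin_cases s
    · refine ⟨(j, 2), ?_, (Hk_adj20 k j).symm⟩
      left
      exact ⟨by simp, by simp⟩
    · refine ⟨(j, 2), ?_, Hk_adj12 k j⟩
      left
      exact ⟨by simp, by simp⟩
    · by_cases hj : j = i
      · subst hj
        exact ⟨(j, 1), Or.inr rfl, (Hk_adj12 k j).symm⟩
      · refine ⟨(j, 0), ?_, Hk_adj20 k j⟩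
        left
        refine ⟨by simp, ?_⟩
        simp only [Set.mem_singleton_iff, Prod.mk.injEq]
        exact fun h => hj h.1

/-- For every `k ≥ 1`, the set `S = {a_1, c_1, …, a_k, c_k}` (the vertices that are not
some `b_i`) is a secure total dominating set of `H_k`, so `γ_st(H_k) ≤ 2k`. -/
theorem Hk_stds_upper (k : ℕ) (hk : 1 ≤ k) :
    STDS (Hk k) {p : Fin k × Fin 3 | p.2 ≠ 1} ∧ gammaSt (Hk k) ≤ 2 * k := by
  have h1 := Hk_stds k
  refine ⟨h1, Nat.sInf_le ?_⟩
  exact ⟨_, h1, Hk_card_aux k⟩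
end

section
/- For each k ≥ 1, no set of 2k − 1 vertices of the graph H_k is a secure total dominating set. -/
open SimpleGraph

variable {V : Type*}

lemma b_adj {k : ℕ} {i : Fin k} {w : Fin k × Fin 3} (h : (Hk k).Adj (i,1) w) :
    w = (i,0) ∨ w = (i,2) := by
  obtain ⟨hne, h | h⟩ := h <;> obtain ⟨j, t⟩ := w <;>
    simp only [HkRel, Prod.mk.injEq] at h ⊢ <;> fin_cases t <;> simp_all

/-- For every `k ≥ 1`, no set of `2k - 1` vertices of `H_k` is a secure total dominating
set. -/
theorem Hk_no_small_stds (k : ℕ) (hk : 1 ≤ k)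
    (S : Set (Fin k × Fin 3)) (hcard : S.ncard = 2 * k - 1) :
    ¬ STDS (Hk k) S := by
  rintro ⟨htd, hsec⟩
  classical
  have key : ∀ i : Fin k, ∃ x y : Fin 3, x ≠ y ∧ (i,x) ∈ S ∧ (i,y) ∈ S := by
    intro i
    by_cases hb : (i, (1:Fin 3)) ∈ S
    · obtain ⟨u, huS, hadj⟩ := htd (i,1)
      rcases b_adj hadj with rfl | rfl
      · exact ⟨1, 0, by decide, hb, huS⟩
      · exact ⟨1, 2, by decide, hb, huS⟩
    · obtain ⟨v, hvS, hadjv, htd'⟩ := hsec (i,1) hb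
      rcases b_adj hadjv with rfl | rfl
      · obtain ⟨u, huS', hadj'⟩ := htd' (i,1)
        rcases b_adj hadj' with rfl | rfl
        · rcases huS' with ⟨_, h⟩ | h
          · simp at h
          · simp at h
        · refine ⟨0, 2, by decide, hvS, ?_⟩
          rcases huS' with ⟨h, _⟩ | h
          · exact h
          · simp at h
      · obtain ⟨u, huS', hadj'⟩ := htd' (i,1)
        rcases b_adj hadj' with rfl | rfl
        · refine ⟨2, 0, by decide, hvS, ?_⟩
          rcases huS' with ⟨h, _⟩ | h
          · exact h
          · simp at h
        · rcases huS' with ⟨_, h⟩ | h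
          · simp at h
          · simp at h
  have hfin : S.Finite := Set.toFinite S
  set F := hfin.toFinset with hF
  have hsum : F.card = ∑ i : Fin k, (F.filter fun p => p.1 = i).card :=
    Finset.card_eq_sum_card_fiberwise (fun x _ => Finset.mem_univ x.1)
  have hge : ∀ i : Fin k, 2 ≤ (F.filter fun p => p.1 = i).card := by
    intro i
    obtain ⟨x, y, hxy, hx, hy⟩ := key i
    have hsub : ({(i,x), (i,y)} : Finset (Fin k × Fin 3)) ⊆ F.filter fun p => p.1 = i := by
      intro p hp
      simp only [Finset.mem_insert, Finset.mem_singleton] at hp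
      rcases hp with rfl | rfl <;> simp [hF, Set.Finite.mem_toFinset] <;> assumption
    have := Finset.card_le_card hsub
    rwa [Finset.card_pair (by simp [hxy])] at this
  have h2k : 2 * k ≤ F.card := by
    rw [hsum]
    calc 2 * k = ∑ _i : Fin k, 2 := by simp [mul_comm]
    _ ≤ _ := Finset.sum_le_sum fun i _ => hge i
  have hFcard : F.card = S.ncard := (Set.ncard_eq_toFinset_card S hfin).symm
  omega
end

section
/- For each k ≥ 1, the fan graph G_k on vertices v_1, …, v_{3k+1} with edges {v_i v_{i+1} : 2 ≤ i ≤ 3k} ∪ {v_1 v_i : 2 ≤ i ≤ 3k+1} has secure total domination number γ_st(G_k) = k + 1 = ⌈(n+2)/3⌉ where n = 3k+1. -/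
open SimpleGraph

variable {V : Type*}

/-- The edges of the fan graph `G_k`: vertex `0` is `v_1` (the hub), and vertex `j`
(for `1 ≤ j ≤ 3k`) is `v_{j+1}` on the outer path. -/
def FanRel (k : ℕ) (u v : Fin (3 * k + 1)) : Prop :=
  ((u : ℕ) = 0 ∧ (v : ℕ) ≠ 0) ∨ (1 ≤ (u : ℕ) ∧ (v : ℕ) = (u : ℕ) + 1)

/-- The fan graph `G_k`, a maximal outerplanar graph on `n = 3k + 1` vertices. -/
def FanG (k : ℕ) : SimpleGraph (Fin (3 * k + 1)) := SimpleGraph.fromRel (FanRel k)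


/- ---------------- auxiliary material ---------------- -/

lemma fan_adj {k : ℕ} (u v : Fin (3*k+1)) :
    (FanG k).Adj u v ↔ ((u:ℕ) ≠ (v:ℕ) ∧
      ((u:ℕ) = 0 ∨ (v:ℕ) = 0 ∨ (v:ℕ) = (u:ℕ)+1 ∨ (u:ℕ) = (v:ℕ)+1)) := by
  simp only [FanG, SimpleGraph.fromRel_adj, FanRel, ne_eq, Fin.ext_iff]
  omega

/-- the witness set: hub `0` together with all vertices `≡ 2 [MOD 3]`. -/
def Sgood (k : ℕ) : Set (Fin (3*k+1)) := {x | (x:ℕ) = 0 ∨ (x:ℕ) % 3 = 2}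

lemma mem_sgood {k : ℕ} (x : Fin (3*k+1)) :
    x ∈ Sgood k ↔ (x:ℕ) = 0 ∨ (x:ℕ) % 3 = 2 := Iff.rfl

lemma sgood_stds {k : ℕ} (hk : 1 ≤ k) : STDS (FanG k) (Sgood k) := by
  have hz : (0:ℕ) < 3*k+1 := by omega
  have ht : (2:ℕ) < 3*k+1 := by omega
  set z : Fin (3*k+1) := ⟨0, hz⟩ with hzdef
  set t : Fin (3*k+1) := ⟨2, ht⟩ with htdef
  have hzv : (z:ℕ) = 0 := rfl
  have htv : (t:ℕ) = 2 := rfl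
  have hzS : z ∈ Sgood k := Or.inl hzv
  have htS : t ∈ Sgood k := Or.inr (by omega)
  have htd : TotalDom (FanG k) (Sgood k) := by
    intro v
    by_cases hv : (v:ℕ) = 0
    · exact ⟨t, htS, (fan_adj _ _).2 (by omega)⟩
    · exact ⟨z, hzS, (fan_adj _ _).2 (by omega)⟩
  refine ⟨htd, ?_⟩
  intro u hu
  have hu' : ¬((u:ℕ) = 0 ∨ (u:ℕ) % 3 = 2) := hu
  push_neg at hu'
  obtain ⟨hu0, hu2⟩ := hu'
  obtain ⟨v, hvS, hv2, hadj⟩ :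
      ∃ v : Fin (3*k+1), v ∈ Sgood k ∧ (v:ℕ) % 3 = 2 ∧ (FanG k).Adj u v := by
    by_cases h : (u:ℕ) % 3 = 1
    · have hlt : (u:ℕ) + 1 < 3*k+1 := by have := u.isLt; omega
      set v : Fin (3*k+1) := ⟨(u:ℕ)+1, hlt⟩ with hvdef
      have hvv : (v:ℕ) = (u:ℕ)+1 := rfl
      exact ⟨v, Or.inr (by omega), by omega, (fan_adj _ _).2 (by omega)⟩
    · have hge : 1 ≤ (u:ℕ) := by omega
      have hlt : (u:ℕ) - 1 < 3*k+1 := by have := u.isLt; omega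
      set v : Fin (3*k+1) := ⟨(u:ℕ)-1, hlt⟩ with hvdef
      have hvv : (v:ℕ) = (u:ℕ)-1 := rfl
      exact ⟨v, Or.inr (by omega), by omega, (fan_adj _ _).2 (by omega)⟩
  refine ⟨v, hvS, hadj, ?_⟩
  intro w
  by_cases hw : (w:ℕ) = 0
  · exact ⟨u, Or.inr rfl, (fan_adj _ _).2 (by omega)⟩
  · refine ⟨z, Or.inl ⟨hzS, ?_⟩, (fan_adj _ _).2 (by omega)⟩
    rw [Set.mem_singleton_iff, Fin.ext_iff]
    omega

lemma range_count (k : ℕ) :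
    ((Finset.range (3*k+1)).filter (fun m => m = 0 ∨ m % 3 = 2)).card = k + 1 := by
  induction k with
  | zero => decide
  | succ n ih =>
    have h : 3*(n+1)+1 = (3*n+1) + 1 + 1 + 1 := by ring
    rw [h, Finset.range_add_one, Finset.range_add_one, Finset.range_add_one,
      Finset.filter_insert, Finset.filter_insert, Finset.filter_insert]
    have h1 : ¬((3*n+1) = 0 ∨ (3*n+1) % 3 = 2) := by omega
    have h2 : ((3*n+1+1) = 0 ∨ (3*n+1+1) % 3 = 2) := by omega
    have h3 : ¬((3*n+1+1+1) = 0 ∨ (3*n+1+1+1) % 3 = 2) := by omega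
    rw [if_neg h3, if_pos h2, if_neg h1]
    rw [Finset.card_insert_of_notMem (fun hmem => by
      simp only [Finset.mem_filter, Finset.mem_range] at hmem; omega)]
    rw [ih]

lemma sgood_ncard {k : ℕ} : (Sgood k).ncard = k + 1 := by
  classical
  have h1 : (Sgood k).ncard = (Sgood k).toFinset.card := Set.ncard_eq_toFinset_card' _
  rw [h1, ← range_count k]
  apply Finset.card_bij (fun (a : Fin (3*k+1)) _ => (a : ℕ))
  · intro a ha
    rw [Set.mem_toFinset, mem_sgood] at ha
    simp only [Finset.mem_filter, Finset.mem_range]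
    exact ⟨a.isLt, ha⟩
  · intro a _ b _ h
    exact Fin.ext h
  · intro m hm
    simp only [Finset.mem_filter, Finset.mem_range] at hm
    exact ⟨⟨m, hm.1⟩, by rw [Set.mem_toFinset]; exact hm.2, rfl⟩

/-- every block of three consecutive path vertices meets any STDS. -/
lemma block_meets {k : ℕ} {S : Set (Fin (3*k+1))} (hS : STDS (FanG k) S)
    {i : ℕ} (hi : i < k) : ∃ x ∈ S, 3*i+1 ≤ (x:ℕ) ∧ (x:ℕ) ≤ 3*i+3 := by
  by_contra hcon
  push_neg at hcon
  have halt : 3*i+2 < 3*k+1 := by omega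
  set a : Fin (3*k+1) := ⟨3*i+2, halt⟩ with hadef
  have hav : (a:ℕ) = 3*i+2 := rfl
  have haS : a ∉ S := fun h => by have := hcon a h; omega
  obtain ⟨v, hvS, hadj, hTD⟩ := hS.2 a haS
  obtain ⟨hne, h⟩ := (fan_adj a v).1 hadj
  have hv0 : (v:ℕ) = 0 := by have := hcon v hvS; omega
  obtain ⟨u, hu, huadj⟩ := hTD a
  obtain ⟨hne2, h2⟩ := (fan_adj a u).1 huadj
  rcases hu with ⟨huS, hune⟩ | hua
  · have := hcon u huS
    have hu0 : (u:ℕ) ≠ 0 := fun h0 => hune (by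
      rw [Set.mem_singleton_iff, Fin.ext_iff]; omega)
    omega
  · rw [Set.mem_singleton_iff] at hua
    rw [hua] at huadj
    exact (FanG k).irrefl huadj

/-- if the hub is not in an STDS then vertices `1` and `2` are. -/
lemma ones_in {k : ℕ} (hk : 1 ≤ k) {S : Set (Fin (3*k+1))} (hS : STDS (FanG k) S)
    (h0 : (⟨0, by omega⟩ : Fin (3*k+1)) ∉ S) :
    (⟨1, by omega⟩ : Fin (3*k+1)) ∈ S ∧ (⟨2, by omega⟩ : Fin (3*k+1)) ∈ S := by
  have hval0 : ∀ x ∈ S, (x:ℕ) ≠ 0 := by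
    intro x hx hx0
    exact h0 (by rwa [show (⟨0, by omega⟩ : Fin (3*k+1)) = x from Fin.ext hx0.symm])
  have h1lt : (1:ℕ) < 3*k+1 := by omega
  set one : Fin (3*k+1) := ⟨1, h1lt⟩ with honedef
  have honev : (one:ℕ) = 1 := rfl
  have h1 : one ∈ S := by
    by_contra h1
    obtain ⟨v, hvS, hadj, hTD⟩ := hS.2 one h1
    obtain ⟨hne, h⟩ := (fan_adj one v).1 hadj
    have hv2 : (v:ℕ) = 2 := by have := hval0 v hvS; omega
    obtain ⟨u, hu, huadj⟩ := hTD one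
    obtain ⟨hne2, h2⟩ := (fan_adj one u).1 huadj
    rcases hu with ⟨huS, hune⟩ | hua
    · have hu0 := hval0 u huS
      exact hune (by rw [Set.mem_singleton_iff, Fin.ext_iff]; omega)
    · rw [Set.mem_singleton_iff] at hua
      rw [hua] at huadj
      exact (FanG k).irrefl huadj
  refine ⟨h1, ?_⟩
  obtain ⟨u, huS, huadj⟩ := hS.1 one
  obtain ⟨hne, h⟩ := (fan_adj one u).1 huadj
  have hu0 := hval0 u huS
  have hu2 : (u:ℕ) = 2 := by omega
  rwa [show (⟨2, by omega⟩ : Fin (3*k+1)) = u from Fin.ext hu2.symm]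

/-- block / hub classifier. -/
def cfun {k : ℕ} (x : Fin (3*k+1)) : ℕ := if (x:ℕ) = 0 then 1 else ((x:ℕ)+2)/3

lemma lower_bound {k : ℕ} (hk : 1 ≤ k) {S : Set (Fin (3*k+1))}
    (hS : STDS (FanG k) S) : k + 1 ≤ S.ncard := by
  classical
  set T := S.toFinset with hT
  have hmem : ∀ x : Fin (3*k+1), x ∈ T ↔ x ∈ S := fun x => Set.mem_toFinset
  have h2 : 1 < (T.filter (fun x => cfun x = 1)).card := by
    rw [Finset.one_lt_card]
    by_cases h0 : (⟨0, by omega⟩ : Fin (3*k+1)) ∈ S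
    · obtain ⟨b, hbS, hb1, hb3⟩ := block_meets hS hk
      refine ⟨⟨0, by omega⟩, ?_, b, ?_, ?_⟩
      · exact Finset.mem_filter.2 ⟨(hmem _).2 h0, by simp [cfun]⟩
      · refine Finset.mem_filter.2 ⟨(hmem _).2 hbS, ?_⟩
        simp only [cfun]
        rw [if_neg (by omega)]
        omega
      · intro hc
        rw [Fin.ext_iff] at hc
        simp only [Fin.val_mk] at hc
        omega
    · obtain ⟨ha, hb⟩ := ones_in hk hS h0
      refine ⟨⟨1, by omega⟩, ?_, ⟨2, by omega⟩, ?_, ?_⟩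
      · exact Finset.mem_filter.2 ⟨(hmem _).2 ha, by simp [cfun]⟩
      · exact Finset.mem_filter.2 ⟨(hmem _).2 hb, by simp [cfun]⟩
      · intro hc
        rw [Fin.ext_iff] at hc
        simp only [Fin.val_mk] at hc
        omega
  have himg : Finset.Icc 2 k ⊆ (T.filter (fun x => ¬ cfun x = 1)).image cfun := by
    intro j hj
    rw [Finset.mem_Icc] at hj
    obtain ⟨x, hxS, hx1, hx3⟩ := block_meets hS (show j - 1 < k by omega)
    have hcx : cfun x = j := by
      simp only [cfun]
      rw [if_neg (by omega)]
      omega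
    exact Finset.mem_image.2 ⟨x, Finset.mem_filter.2 ⟨(hmem _).2 hxS, by omega⟩, hcx⟩
  have h3 : k - 1 ≤ (T.filter (fun x => ¬ cfun x = 1)).card := by
    calc k - 1 = (Finset.Icc 2 k).card := by rw [Nat.card_Icc]; omega
      _ ≤ ((T.filter (fun x => ¬ cfun x = 1)).image cfun).card := Finset.card_le_card himg
      _ ≤ _ := Finset.card_image_le
  have hcard : (T.filter (fun x => cfun x = 1)).card
      + (T.filter (fun x => ¬ cfun x = 1)).card = T.card :=
    Finset.card_filter_add_card_filter_not _
  have hS' : S.ncard = T.card := Set.ncard_eq_toFinset_card' _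
  omega

/-- For every `k ≥ 1`, the secure total domination number of the fan `G_k` on
`n = 3k + 1` vertices is `k + 1 = ⌈(n+2)/3⌉`. -/
theorem gammaSt_fan (k : ℕ) (hk : 1 ≤ k) :
    gammaSt (FanG k) = k + 1 ∧ k + 1 = ((3 * k + 1) + 4) / 3 := by
  have hmem : k + 1 ∈ {n | ∃ S : Set (Fin (3*k+1)), STDS (FanG k) S ∧ S.ncard = n} :=
    ⟨Sgood k, sgood_stds hk, sgood_ncard⟩
  constructor
  · refine le_antisymm (Nat.sInf_le hmem) (le_csInf ⟨k+1, hmem⟩ ?_)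
    rintro n ⟨S, hS, rfl⟩
    exact lower_bound hk hS
  · omega
end

section
/- For each k ≥ 1, the set S = {v_1} ∪ {v_{3i} : 1 ≤ i ≤ k} is a secure total dominating set of the fan graph G_k on vertices v_1, …, v_{3k+1}. -/
open SimpleGraph

variable {V : Type*}

lemma fan_adj0 {k : ℕ} {u v : Fin (3 * k + 1)} (hu : (u : ℕ) = 0) (hv : (v : ℕ) ≠ 0) :
    (FanG k).Adj u v := by
  refine ⟨fun e => hv (e ▸ hu), Or.inl (Or.inl ⟨hu, hv⟩)⟩

lemma fan_adj_succ {k : ℕ} {u v : Fin (3 * k + 1)} (h1 : 1 ≤ (u : ℕ))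
    (h2 : (v : ℕ) = (u : ℕ) + 1) : (FanG k).Adj u v := by
  refine ⟨fun e => ?_, Or.inl (Or.inr ⟨h1, h2⟩)⟩
  have := congrArg Fin.val e
  omega

/-- For every `k ≥ 1`, the set `S = {v_1} ∪ {v_{3i} : 1 ≤ i ≤ k}` (the hub together with
the vertices of index `≡ 2 mod 3` in the 0-indexed encoding) is a secure total dominating
set of the fan `G_k`. -/
theorem fan_stds (k : ℕ) (hk : 1 ≤ k) :
    STDS (FanG k) {j : Fin (3 * k + 1) | (j : ℕ) = 0 ∨ (j : ℕ) % 3 = 2} := by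
  have hdom : ∀ (T : Set (Fin (3 * k + 1))) (a : Fin (3 * k + 1)),
      (a : ℕ) ≠ 0 → a ∈ T → (⟨0, by omega⟩ : Fin (3 * k + 1)) ∈ T →
      TotalDom (FanG k) T := by
    intro T a ha haT h0T v
    by_cases hv : (v : ℕ) = 0
    · exact ⟨a, haT, fan_adj0 hv ha⟩
    · exact ⟨_, h0T, (fan_adj0 rfl hv).symm⟩
  constructor
  · refine hdom _ ⟨2, by omega⟩ (by simp) ?_ (Or.inl rfl)
    exact Or.inr (by simp)
  · intro u hu
    simp only [Set.mem_setOf_eq, not_or] at hu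
    obtain ⟨hu0, hu2⟩ := hu
    have hlt := u.isLt
    by_cases h1 : (u : ℕ) % 3 = 1
    · refine ⟨⟨(u : ℕ) + 1, by omega⟩, Or.inr (by simp; omega), fan_adj_succ (by omega) rfl, ?_⟩
      refine hdom _ u hu0 (Or.inr rfl) (Or.inl ⟨Or.inl rfl, ?_⟩)
      intro h
      have : (0 : ℕ) = (u : ℕ) + 1 := congrArg Fin.val h
      omega
    · have h0 : (u : ℕ) % 3 = 0 := by omega
      refine ⟨⟨(u : ℕ) - 1, by omega⟩, Or.inr (by simp; omega),
        (fan_adj_succ (u := (⟨(u : ℕ) - 1, by omega⟩ : Fin (3 * k + 1))) (by simp; omega)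
          (by simp; omega)).symm, ?_⟩
      refine hdom _ u hu0 (Or.inr rfl) (Or.inl ⟨Or.inl rfl, ?_⟩)
      intro h
      have : (0 : ℕ) = (u : ℕ) - 1 := congrArg Fin.val h
      omega
end
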